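/- arXiv:1508.06839 — 6 statements merged into one kernel-verified Lean document; each statement's English description precedes it below -/
import Mathlib

section
/- Let m ≥ 1 and let a, b, c : ℝ^m → ℝ be continuous with a₊ + c₊ bounded on ℝ^m, b(x) > 0 for all x, and b(x) ≥ C·|x|^{−μ} for |x| ≥ R₀, for some constants C > 0, R₀ > 0 and 0 ≤ μ < 2. Let σ > 1, τ < 1, γ ∈ ℝ, and set γ* = max{1, γ}. Let u be a positive C² function on ℝ^m satisfying Δu + a(x)u − b(x)u^σ + c(x)u^τ ≥ 0 at every point of Ω_γ = {x ∈ ℝ^m : u(x) > γ}. If H₀ ≥ 0 is a constant with (a₊(x) + c₊(x))/b(x) ≤ H₀ for all x ∈ Ω_{γ*} = {x : u(x) > γ*}, then u is bounded above and u(x) ≤ max{γ*, H₀^{1/(σ−1)}} for all x ∈ ℝ^m. -/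
/-!
Fix a level `L` above `max γ* H₀^{1/(σ-1)}`. Wherever `u ≥ L`, the terms `a u` and `c u^τ`
are absorbed into `b u^σ`, leaving `Δu ≥ β b u^σ` with `β = 1 - H₀ / L^{σ-1} > 0`.
On the ball `B_R`, where `b ≥ C' R^{-μ}`, compare `u` with the Keller–Osserman barrier
`v = A (1 - |x|²/R²)^{-2/(σ-1)}`. It blows up on `∂B_R`, and the exponent `2/(σ-1)` makes
`Δv ≲ v^σ / (R² A^{σ-1})`, so `Δv < β b v^σ` once `A^{σ-1} ≳ R^{μ-2}`. At a positive
maximum of `u - v` this contradicts `Δu ≤ Δv`, hence `u ≤ v` on `B_R`. Because `μ < 2`,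
the amplitude can be taken as `A_R = L + O(R^{-(2-μ)/(σ-1)})`, and letting `R → ∞`
gives `u ≤ L`.
-/

open Real Set

/-- The Euclidean Laplacian: trace of the Hessian. -/
noncomputable def lap {m : ℕ} (u : EuclideanSpace ℝ (Fin m) → ℝ)
    (x : EuclideanSpace ℝ (Fin m)) : ℝ :=
  ∑ i : Fin m, iteratedFDeriv ℝ 2 u x ![EuclideanSpace.single i 1, EuclideanSpace.single i 1]

open Filter Topology InnerProductSpace Laplacian
open scoped RealInnerProductSpace

theorem lap_eq_laplacian {m : ℕ} (u : EuclideanSpace ℝ (Fin m) → ℝ) : lap u = Δ u := by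
  rw [laplacian_eq_iteratedFDeriv_orthonormalBasis u (EuclideanSpace.basisFun (Fin m) ℝ)]
  ext x
  simp [lap]

theorem IsLocalMax.deriv_deriv_nonpos {f : ℝ → ℝ} {x₀ : ℝ} (h : IsLocalMax f x₀)
    (hf : ContinuousAt f x₀) : deriv (deriv f) x₀ ≤ 0 := by
  by_contra! hpos
  have hmin := isLocalMin_of_deriv_deriv_pos hpos h.deriv_eq_zero hf
  have hconst : f =ᶠ[𝓝 x₀] fun _ => f x₀ := (h.and hmin).mono fun x hx => le_antisymm hx.1 hx.2
  have hderiv : deriv f =ᶠ[𝓝 x₀] fun _ => 0 :=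
    hconst.eventually_nhds.mono fun x hx => by
      rw [EventuallyEq.deriv_eq (hx : f =ᶠ[𝓝 x] fun _ => f x₀), deriv_const]
  rw [hderiv.deriv_eq, deriv_const] at hpos
  exact hpos.false

theorem IsLocalMax.fderiv_fderiv_apply_self_nonpos {E : Type*} [NormedAddCommGroup E]
    [NormedSpace ℝ E] {w : E → ℝ} {y : E} (h : IsLocalMax w y) (hw : ContDiffAt ℝ 2 w y) (e : E) :
    fderiv ℝ (fderiv ℝ w) y e e ≤ 0 := by
  have hline : ∀ t : ℝ, HasDerivAt (fun s : ℝ => y + s • e) e t := fun t => by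
    simpa using ((hasDerivAt_id t).smul_const e).const_add y
  have hcont : Continuous fun s : ℝ => y + s • e := by fun_prop
  have hy : Tendsto (fun s : ℝ => y + s • e) (𝓝 0) (𝓝 y) := by
    simpa using hcont.tendsto 0
  have hdiff : ∀ᶠ z in 𝓝 y, DifferentiableAt ℝ w z := by
    filter_upwards [hw.eventually (by simp)] with z hz using hz.differentiableAt (by norm_num)
  have hderiv :
      deriv (fun s : ℝ => w (y + s • e)) =ᶠ[𝓝 0] fun s : ℝ => fderiv ℝ w (y + s • e) e := by
    filter_upwards [hy.eventually hdiff] with s hs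
    exact (hs.hasFDerivAt.comp_hasDerivAt s (hline s)).deriv
  have hdd :
      HasDerivAt (fun s : ℝ => fderiv ℝ w (y + s • e) e) (fderiv ℝ (fderiv ℝ w) y e e) 0 := by
    have hD : DifferentiableAt ℝ (fderiv ℝ w) (y + (0 : ℝ) • e) := by
      rw [zero_smul, add_zero]
      exact (hw.fderiv_right (m := 1) (by norm_num)).differentiableAt (by norm_num)
    have h1 : HasDerivAt (fun s : ℝ => fderiv ℝ w (y + s • e))
        (fderiv ℝ (fderiv ℝ w) (y + (0 : ℝ) • e) e) 0 :=
      hD.hasFDerivAt.comp_hasDerivAt (0 : ℝ) (hline 0)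
    have h := h1.clm_apply (hasDerivAt_const (0 : ℝ) e)
    rw [zero_smul, add_zero] at h
    simpa only [map_zero, add_zero] using h
  have hmax : IsLocalMax (fun s : ℝ => w (y + s • e)) 0 := by
    simpa [IsLocalMax, IsMaxFilter] using hy.eventually h
  rw [← hdd.deriv, ← hderiv.deriv_eq]
  refine hmax.deriv_deriv_nonpos (ContinuousAt.comp (g := w) ?_ hcont.continuousAt)
  simpa using hw.continuousAt

theorem IsCompact.exists_isLocalMax_of_le_off {X : Type*} [TopologicalSpace X] {f : X → ℝ}
    {U K : Set X} (hU : IsOpen U) (hK : IsCompact K) (hKU : K ⊆ U) (hf : ContinuousOn f K)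
    {x : X} (hx : x ∈ K) (hout : ∀ z ∈ U \ K, f z ≤ f x) :
    ∃ y ∈ K, f x ≤ f y ∧ IsLocalMax f y := by
  obtain ⟨y, hyK, hmax⟩ := hK.exists_isMaxOn ⟨x, hx⟩ hf
  refine ⟨y, hyK, hmax hx, ?_⟩
  filter_upwards [hU.mem_nhds (hKU hyK)] with z hzU
  by_cases hzK : z ∈ K
  · exact hmax hzK
  · exact (hout z ⟨hzU, hzK⟩).trans (hmax hx)

section Laplacian

variable {E : Type*} [NormedAddCommGroup E] [InnerProductSpace ℝ E] [FiniteDimensional ℝ E]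

theorem IsLocalMax.laplacian_nonpos {w : E → ℝ} {y : E} (h : IsLocalMax w y)
    (hw : ContDiffAt ℝ 2 w y) : Δ w y ≤ 0 := by
  rw [laplacian_eq_iteratedFDeriv_stdOrthonormalBasis]
  refine Finset.sum_nonpos fun i _ => ?_
  rw [iteratedFDeriv_two_apply]
  exact h.fderiv_fderiv_apply_self_nonpos hw _

theorem laplacian_le_of_isLocalMax_sub {u v : E → ℝ} {y : E} (hu : ContDiffAt ℝ 2 u y)
    (hv : ContDiffAt ℝ 2 v y) (h : IsLocalMax (u - v) y) : Δ u y ≤ Δ v y := by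
  have h' := h.laplacian_nonpos (hu.sub hv)
  rw [hu.laplacian_sub hv] at h'
  linarith

theorem laplacian_comp_norm_sq {φ φ' : ℝ → ℝ} {φ'' : ℝ} {x : E}
    (hφ : ∀ᶠ t in 𝓝 (‖x‖ ^ 2), HasDerivAt φ (φ' t) t)
    (hφ' : HasDerivAt φ' φ'' (‖x‖ ^ 2)) :
    Δ (fun z : E => φ (‖z‖ ^ 2)) x =
      2 * Module.finrank ℝ E * φ' (‖x‖ ^ 2) + 4 * ‖x‖ ^ 2 * φ'' := by
  set G : E → E →L[ℝ] ℝ := fun z => φ' (‖z‖ ^ 2) • (2 • innerSL ℝ z)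
  have hfderiv : fderiv ℝ (fun z => φ (‖z‖ ^ 2)) =ᶠ[𝓝 x] G := by
    have hq : Tendsto (fun z : E => ‖z‖ ^ 2) (𝓝 x) (𝓝 (‖x‖ ^ 2)) :=
      (contDiff_norm_sq ℝ (n := 0)).continuous.tendsto x
    filter_upwards [hq.eventually hφ] with z hz
    exact (hz.comp_hasFDerivAt z (hasStrictFDerivAt_norm_sq z).hasFDerivAt).fderiv
  have hG : HasFDerivAt G _ x :=
    (hφ'.comp_hasFDerivAt x (hasStrictFDerivAt_norm_sq x).hasFDerivAt).smul
      ((2 • innerSL ℝ : E →L[ℝ] E →L[ℝ] ℝ).hasFDerivAt (x := x))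
  have hessian : ∀ e, iteratedFDeriv ℝ 2 (fun z => φ (‖z‖ ^ 2)) x ![e, e] =
      2 * φ' (‖x‖ ^ 2) * ‖e‖ ^ 2 + 4 * φ'' * ⟪x, e⟫ ^ 2 := by
    intro e
    rw [iteratedFDeriv_two_apply, hfderiv.fderiv_eq, hG.fderiv]
    simp only [Function.comp_apply, Fin.isValue, Matrix.cons_val_zero, Matrix.cons_val_one,
      Matrix.cons_val_fin_one, add_apply, smul_apply,
      ContinuousLinearMap.smulRight_apply, coe_innerSL_apply, nsmul_eq_mul, Nat.cast_ofNat,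
      smul_eq_mul]
    rw [innerSL_apply_apply, real_inner_self_eq_norm_sq]
    ring
  rw [laplacian_eq_iteratedFDeriv_stdOrthonormalBasis]
  simp only [hessian, Finset.sum_add_distrib, ← Finset.mul_sum,
    (stdOrthonormalBasis ℝ E).sum_sq_inner_left, OrthonormalBasis.norm_eq_one, one_pow,
    Finset.sum_const, Finset.card_univ, Fintype.card_fin, nsmul_eq_mul, mul_one]
  ring

theorem le_of_laplacian_lt_laplacian {u v : E → ℝ} {U K : Set E} (hU : IsOpen U)
    (hK : IsCompact K) (hKU : K ⊆ U) (hu : ∀ y ∈ U, ContDiffAt ℝ 2 u y)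
    (hv : ∀ y ∈ U, ContDiffAt ℝ 2 v y) (hΔ : ∀ y ∈ U, v y < u y → Δ v y < Δ u y)
    (hout : ∀ z ∈ U \ K, u z ≤ v z) {x : E} (hx : x ∈ U) : u x ≤ v x := by
  by_contra! hvu
  have hxK : x ∈ K := by_contra fun hxK => (hout x ⟨hx, hxK⟩).not_gt hvu
  have hcont : ContinuousOn (u - v) K := fun y hy =>
    ((hu y (hKU hy)).continuousAt.sub (hv y (hKU hy)).continuousAt).continuousWithinAt
  obtain ⟨y, hyK, hxy, hmax⟩ := hK.exists_isLocalMax_of_le_off hU hKU hcont hxK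
    fun z hz => (sub_nonpos.2 (hout z hz)).trans (sub_pos.2 hvu).le
  have hvy : v y < u y := sub_pos.1 ((sub_pos.2 hvu).trans_le hxy)
  exact (hΔ y (hKU hyK) hvy).not_ge
    (laplacian_le_of_isLocalMax_sub (hu y (hKU hyK)) (hv y (hKU hyK)) hmax)

end Laplacian

theorem hasDerivAt_mul_one_sub_div_rpow (A q e : ℝ) {t : ℝ} (ht : 1 - t / q ≠ 0) :
    HasDerivAt (fun s => A * (1 - s / q) ^ e) (-(A * e / q) * (1 - t / q) ^ (e - 1)) t := by
  have h : HasDerivAt (fun s => 1 - s / q) (-(1 / q)) t := by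
    simpa using ((hasDerivAt_id t).div_const q).const_sub 1
  exact ((h.rpow_const (Or.inl ht)).const_mul A).congr_deriv (by ring)

section Barrier

variable {E : Type*} [NormedAddCommGroup E]

noncomputable def ballBarrier (A R p : ℝ) (z : E) : ℝ := A * (1 - ‖z‖ ^ 2 / R ^ 2) ^ (-p)

variable {A R p : ℝ} {z : E}

theorem one_sub_norm_sq_div_sq_pos (hz : ‖z‖ < R) : 0 < 1 - ‖z‖ ^ 2 / R ^ 2 := by
  have hR : 0 < R := (norm_nonneg z).trans_lt hz
  rw [sub_pos, div_lt_one (by positivity)]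
  exact pow_lt_pow_left₀ hz (norm_nonneg z) two_ne_zero

theorem contDiffAt_ballBarrier [InnerProductSpace ℝ E] {n : WithTop ℕ∞} (hz : ‖z‖ < R) :
    ContDiffAt ℝ n (ballBarrier A R p) z :=
  contDiffAt_const.mul <|
    (contDiffAt_const.sub ((contDiff_norm_sq ℝ).contDiffAt.div_const _)).rpow_const_of_ne
      (one_sub_norm_sq_div_sq_pos hz).ne'

theorem le_ballBarrier (hA : 0 ≤ A) (hp : 0 ≤ p) (hz : ‖z‖ < R) : A ≤ ballBarrier A R p z := by
  have hρ := one_sub_norm_sq_div_sq_pos hz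
  refine le_mul_of_one_le_right hA
    (one_le_rpow_of_pos_of_le_one_of_nonpos hρ ?_ (neg_nonpos.2 hp))
  have : 0 ≤ ‖z‖ ^ 2 / R ^ 2 := by positivity
  linarith

theorem ballBarrier_rpow {σ : ℝ} (hA : 0 ≤ A) (hpσ : p * (σ - 1) = 2) (hz : ‖z‖ < R) :
    ballBarrier A R p z ^ σ = A ^ σ * (1 - ‖z‖ ^ 2 / R ^ 2) ^ (-(p + 2)) := by
  have hρ := one_sub_norm_sq_div_sq_pos hz
  rw [ballBarrier, mul_rpow hA (rpow_nonneg hρ.le _), ← rpow_mul hρ.le]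
  congr 2
  linear_combination -hpσ

theorem exists_lt_forall_le_ballBarrier (hA : 0 < A) (hp : 0 < p) (hR : 0 < R) (M : ℝ) :
    ∃ r < R, ∀ z : E, r < ‖z‖ → ‖z‖ < R → M ≤ ballBarrier A R p z := by
  have hρ : Tendsto (fun t : ℝ => 1 - t ^ 2 / R ^ 2) (𝓝[<] R) (𝓝[>] 0) := by
    refine tendsto_nhdsWithin_of_tendsto_nhds_of_eventually_within _ ?_ ?_
    · have : Tendsto (fun t : ℝ => 1 - t ^ 2 / R ^ 2) (𝓝 R) (𝓝 (1 - R ^ 2 / R ^ 2)) :=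
        (continuous_const.sub ((continuous_pow 2).div_const _)).tendsto R
      rw [div_self (by positivity), sub_self] at this
      exact this.mono_left nhdsWithin_le_nhds
    · filter_upwards [Ioo_mem_nhdsLT hR] with t ht
      rw [mem_Ioi, sub_pos, div_lt_one (by positivity)]
      exact pow_lt_pow_left₀ ht.2 ht.1.le two_ne_zero
  have hlim := ((tendsto_rpow_neg_nhdsGT_zero (neg_lt_zero.2 hp)).comp hρ).const_mul_atTop hA
  obtain ⟨r, hrR, hr⟩ := mem_nhdsLT_iff_exists_Ioo_subset.1 (hlim.eventually_ge_atTop M)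
  exact ⟨r, hrR, fun z hrz hzR => hr ⟨hrz, hzR⟩⟩

theorem laplacian_ballBarrier_le [InnerProductSpace ℝ E] [FiniteDimensional ℝ E] (hA : 0 ≤ A)
    (hp : 0 ≤ p) (hz : ‖z‖ < R) :
    Δ (ballBarrier A R p : E → ℝ) z ≤
      p * (2 * Module.finrank ℝ E + 4 * (p + 1)) / R ^ 2 *
        (A * (1 - ‖z‖ ^ 2 / R ^ 2) ^ (-(p + 2))) := by
  have hR : 0 < R := (norm_nonneg z).trans_lt hz
  have hρ := one_sub_norm_sq_div_sq_pos hz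
  have hφ : ∀ᶠ t in 𝓝 (‖z‖ ^ 2), HasDerivAt (fun s => A * (1 - s / R ^ 2) ^ (-p))
      (-(A * -p / R ^ 2) * (1 - t / R ^ 2) ^ (-p - 1)) t := by
    have hcont : Continuous fun t : ℝ => 1 - t / R ^ 2 := by fun_prop
    filter_upwards [hcont.continuousAt.eventually_ne hρ.ne'] with t ht
    exact hasDerivAt_mul_one_sub_div_rpow A (R ^ 2) (-p) ht
  change Δ (fun z : E => A * (1 - ‖z‖ ^ 2 / R ^ 2) ^ (-p) : E → ℝ) z ≤ _
  rw [laplacian_comp_norm_sq hφ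
    (hasDerivAt_mul_one_sub_div_rpow _ (R ^ 2) (-p - 1) hρ.ne')]
  set ρ := 1 - ‖z‖ ^ 2 / R ^ 2
  have hz2 : ‖z‖ ^ 2 = (1 - ρ) * R ^ 2 := by simp only [ρ]; field_simp; ring
  have h1 : ρ ^ (-p - 1) = ρ * ρ ^ (-(p + 2)) := by
    rw [← rpow_one_add' hρ.le (by linarith)]
    ring_nf
  have h2 : ρ ^ (-p - 1 - 1) = ρ ^ (-(p + 2)) := by ring_nf
  rw [h1, h2, hz2]
  have hX := rpow_nonneg hρ.le (-(p + 2))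
  have hs : 0 ≤ 1 - ρ := by simp only [ρ, sub_sub_cancel]; positivity
  rw [← sub_nonneg]
  convert_to 0 ≤ A * p / R ^ 2 * ρ ^ (-(p + 2)) *
    (2 * Module.finrank ℝ E * (1 - ρ) + 4 * (p + 1) * ρ)
  · field_simp
    ring
  · positivity

theorem tendsto_ballBarrier_atTop {A : ℝ → ℝ} {L : ℝ} (hA : Tendsto A atTop (𝓝 L)) (p : ℝ)
    (x : E) : Tendsto (fun R => ballBarrier (A R) R p x) atTop (𝓝 L) := by
  have h : Tendsto (fun R : ℝ => 1 - ‖x‖ ^ 2 / R ^ 2) atTop (𝓝 1) := by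
    simpa using tendsto_const_nhds.sub
      ((tendsto_const_nhds (x := ‖x‖ ^ 2)).div_atTop (tendsto_pow_atTop two_ne_zero))
  simpa [ballBarrier] using hA.mul (h.rpow_const (p := -p) (Or.inl one_ne_zero))

theorem le_ballBarrier_of_laplacian_ge [InnerProductSpace ℝ E] [FiniteDimensional ℝ E]
    {u b : E → ℝ} {σ β L cb : ℝ} (hσ : 1 < σ) (hpσ : p * (σ - 1) = 2) (hβ : 0 < β)
    (hcb : 0 < cb) (hL : 0 < L) (hLA : L ≤ A)
    (hA : p * (2 * Module.finrank ℝ E + 4 * (p + 1)) / R ^ 2 ≤ β * cb * A ^ (σ - 1))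
    (hu : ContDiff ℝ 2 u) (hsub : ∀ z, L ≤ u z → β * b z * u z ^ σ ≤ Δ u z)
    (hb : ∀ z, ‖z‖ < R → cb ≤ b z) {x : E} (hx : ‖x‖ < R) : u x ≤ ballBarrier A R p x := by
  have hR : 0 < R := (norm_nonneg x).trans_lt hx
  have hA0 : 0 < A := hL.trans_le hLA
  have hp : 0 < p := by nlinarith
  obtain ⟨M, hM⟩ := (isCompact_closedBall (0 : E) R).bddAbove_image hu.continuous.continuousOn
  obtain ⟨r, hrR, hr⟩ := exists_lt_forall_le_ballBarrier (E := E) hA0 hp hR M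
  refine le_of_laplacian_lt_laplacian Metric.isOpen_ball
    (isCompact_closedBall 0 (max r ‖x‖)) (Metric.closedBall_subset_ball (max_lt hrR hx))
    (fun y _ => hu.contDiffAt) (fun y hy => contDiffAt_ballBarrier (mem_ball_zero_iff.1 hy))
    ?_ ?_ (mem_ball_zero_iff.2 hx)
  · intro y hy hvu
    rw [mem_ball_zero_iff] at hy
    have hAv := le_ballBarrier hA0.le hp.le hy
    have hAσ : A ^ σ = A ^ (σ - 1) * A := by
      rw [rpow_sub_one hA0.ne']
      field_simp
    calc Δ (ballBarrier A R p : E → ℝ) y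
        ≤ p * (2 * Module.finrank ℝ E + 4 * (p + 1)) / R ^ 2 *
            (A * (1 - ‖y‖ ^ 2 / R ^ 2) ^ (-(p + 2))) :=
          laplacian_ballBarrier_le hA0.le hp.le hy
      _ ≤ β * cb * A ^ (σ - 1) * (A * (1 - ‖y‖ ^ 2 / R ^ 2) ^ (-(p + 2))) := by
          gcongr
          exact mul_nonneg hA0.le (rpow_nonneg (one_sub_norm_sq_div_sq_pos hy).le _)
      _ = β * cb * ballBarrier A R p y ^ σ := by
          rw [ballBarrier_rpow hA0.le hpσ hy, hAσ]
          ring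
      _ < β * cb * u y ^ σ := by
          gcongr
          exact hA0.le.trans hAv
      _ ≤ β * b y * u y ^ σ := by
          gcongr
          · exact (rpow_pos_of_pos (hA0.trans_le (hAv.trans hvu.le)) σ).le
          · exact hb y hy
      _ ≤ Δ u y := hsub y (hLA.trans (hAv.trans hvu.le))
  · rintro z ⟨hzR, hzK⟩
    rw [mem_ball_zero_iff] at hzR
    rw [mem_closedBall_zero_iff, not_le] at hzK
    exact (hM ⟨z, mem_closedBall_zero_iff.2 hzR.le, rfl⟩).trans
      (hr z ((le_max_left _ _).trans_lt hzK) hzR)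

end Barrier

theorem le_of_laplacian_ge_mul_rpow {E : Type*} [NormedAddCommGroup E] [InnerProductSpace ℝ E]
    [FiniteDimensional ℝ E] {u b : E → ℝ} {σ β L μ C' R₁ : ℝ} (hσ : 1 < σ) (hβ : 0 < β)
    (hL : 0 < L) (hμ : μ < 2) (hC' : 0 < C') (hu : ContDiff ℝ 2 u)
    (hsub : ∀ z, L ≤ u z → β * b z * u z ^ σ ≤ Δ u z)
    (hb : ∀ R ≥ R₁, ∀ z, ‖z‖ < R → C' * R ^ (-μ) ≤ b z) (x : E) : u x ≤ L := by
  set p := 2 / (σ - 1)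
  have hp : 0 < p := div_pos two_pos (by linarith)
  have hpσ : p * (σ - 1) = 2 := div_mul_cancel₀ _ (by linarith)
  set κ := p * (2 * Module.finrank ℝ E + 4 * (p + 1))
  have hκ : 0 ≤ κ := mul_nonneg hp.le (by positivity)
  set A : ℝ → ℝ := fun R => L + (κ / (β * C') * R ^ (-(2 - μ))) ^ (σ - 1)⁻¹
  have hA : Tendsto A atTop (𝓝 L) := by
    have h := ((tendsto_rpow_neg_atTop (by linarith : 0 < 2 - μ)).const_mul
      (κ / (β * C'))).rpow_const (p := (σ - 1)⁻¹) (Or.inr (inv_nonneg.2 (by linarith)))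
    rw [mul_zero, zero_rpow (inv_ne_zero (by linarith))] at h
    simpa only [add_zero] using (tendsto_const_nhds (x := L)).add h
  refine ge_of_tendsto (tendsto_ballBarrier_atTop hA p x) ?_
  filter_upwards [eventually_ge_atTop R₁, eventually_gt_atTop ‖x‖] with R hR₁ hxR
  have hR : 0 < R := (norm_nonneg x).trans_lt hxR
  have hbase : 0 ≤ κ / (β * C') * R ^ (-(2 - μ)) := by positivity
  refine le_ballBarrier_of_laplacian_ge hσ hpσ hβ (by positivity) hL
    (le_add_of_nonneg_right (by positivity)) ?_ hu hsub (hb R hR₁) hxR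
  have hR2 : R ^ (-μ) * R ^ (-(2 - μ)) = (R ^ 2)⁻¹ := by
    rw [← rpow_add hR, show -μ + -(2 - μ) = -(2 : ℕ) by ring, rpow_neg hR.le, rpow_natCast]
  calc κ / R ^ 2 = κ * (R ^ (-μ) * R ^ (-(2 - μ))) := by rw [hR2, div_eq_mul_inv]
    _ = β * (C' * R ^ (-μ)) * (κ / (β * C') * R ^ (-(2 - μ))) := by
        field_simp
    _ ≤ β * (C' * R ^ (-μ)) * A R ^ (σ - 1) := by
        gcongr
        rw [← rpow_inv_rpow hbase (by linarith : σ - 1 ≠ 0)]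
        exact rpow_le_rpow (by positivity) (le_add_of_nonneg_left hL.le) (by linarith)

theorem exists_pos_mul_rpow_neg_le {E : Type*} [NormedAddCommGroup E] [ProperSpace E]
    {b : E → ℝ} {C R₀ μ : ℝ} (hb : Continuous b) (hbpos : ∀ x, 0 < b x) (hC : 0 < C)
    (hμ : 0 ≤ μ) (hblow : ∀ x, R₀ ≤ ‖x‖ → C * ‖x‖ ^ (-μ) ≤ b x) :
    ∃ C' > 0, ∀ R ≥ max R₀ 1, ∀ z, ‖z‖ < R → C' * R ^ (-μ) ≤ b z := by
  obtain ⟨z₀, -, hz₀⟩ := (isCompact_closedBall (0 : E) (max R₀ 1)).exists_isMinOn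
    (Metric.nonempty_closedBall.2 (zero_le_one.trans (le_max_right _ _))) hb.continuousOn
  have hC' : 0 < min (b z₀) C := lt_min (hbpos z₀) hC
  refine ⟨min (b z₀) C, hC', fun R hR z hz => ?_⟩
  rcases le_or_gt ‖z‖ (max R₀ 1) with hzR₀ | hzR₀
  · have hRμ : R ^ (-μ) ≤ 1 :=
      rpow_le_one_of_one_le_of_nonpos ((le_max_right _ _).trans hR) (neg_nonpos.2 hμ)
    calc min (b z₀) C * R ^ (-μ) ≤ min (b z₀) C := mul_le_of_le_one_right hC'.le hRμ
      _ ≤ b z₀ := min_le_left _ _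
      _ ≤ b z := hz₀ (mem_closedBall_zero_iff.2 hzR₀)
  · have hz0 : 0 < ‖z‖ := zero_lt_one.trans ((le_max_right _ _).trans_lt hzR₀)
    calc min (b z₀) C * R ^ (-μ) ≤ C * ‖z‖ ^ (-μ) :=
          mul_le_mul (min_le_right _ _) (rpow_le_rpow_of_nonpos hz0 hz.le (neg_nonpos.2 hμ))
            (rpow_nonneg (hz0.trans hz).le _) hC.le
      _ ≤ b z := hblow z ((le_max_left _ _).trans hzR₀.le)

theorem mul_rpow_le_of_lichnerowicz_ineq {a b c t Δu σ τ H₀ L : ℝ} (hσ : 1 < σ) (hτ : τ < 1)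
    (hH₀ : 0 ≤ H₀) (hb : 0 < b) (hL : 1 ≤ L) (ht : L ≤ t)
    (hineq : 0 ≤ Δu + a * t - b * t ^ σ + c * t ^ τ) (hH : (max a 0 + max c 0) / b ≤ H₀) :
    (1 - H₀ / L ^ (σ - 1)) * b * t ^ σ ≤ Δu := by
  have ht0 : 0 < t := by linarith
  have hat : a * t ≤ max a 0 * t := mul_le_mul_of_nonneg_right (le_max_left _ _) ht0.le
  have hct : c * t ^ τ ≤ max c 0 * t := by
    have htτ : t ^ τ ≤ t := by
      simpa using rpow_le_rpow_of_exponent_le (hL.trans ht) hτ.le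
    calc c * t ^ τ ≤ max c 0 * t ^ τ :=
          mul_le_mul_of_nonneg_right (le_max_left _ _) (rpow_nonneg ht0.le _)
      _ ≤ max c 0 * t := mul_le_mul_of_nonneg_left htτ (le_max_right _ _)
  have hH' : (max a 0 + max c 0) * t ≤ H₀ * b * t :=
    mul_le_mul_of_nonneg_right ((div_le_iff₀ hb).1 hH) ht0.le
  have hLσ : 0 < L ^ (σ - 1) := rpow_pos_of_pos (by linarith) _
  have htσ : t ^ σ = t ^ (σ - 1) * t := by
    rw [rpow_sub_one ht0.ne']
    field_simp
  have hgrowth : H₀ * b * t ≤ H₀ / L ^ (σ - 1) * b * t ^ σ := by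
    calc H₀ * b * t = H₀ / L ^ (σ - 1) * L ^ (σ - 1) * b * t := by field_simp
      _ ≤ H₀ / L ^ (σ - 1) * t ^ (σ - 1) * b * t := by gcongr
      _ = H₀ / L ^ (σ - 1) * b * t ^ σ := by rw [htσ]; ring
  linarith

theorem lichnerowicz_apriori_upper_bound_general {m : ℕ}
    (a b c : EuclideanSpace ℝ (Fin m) → ℝ)
    (hb : Continuous b)
    (hbpos : ∀ x, 0 < b x)
    (C R₀ μ : ℝ) (hC : 0 < C) (hμ0 : 0 ≤ μ) (hμ2 : μ < 2)
    (hblow : ∀ x, R₀ ≤ ‖x‖ → C * ‖x‖ ^ (-μ) ≤ b x)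
    (σ τ γ : ℝ) (hσ : 1 < σ) (hτ : τ < 1)
    (u : EuclideanSpace ℝ (Fin m) → ℝ) (hu : ContDiff ℝ 2 u)
    (hineq : ∀ x, γ < u x →
      0 ≤ lap u x + a x * u x - b x * u x ^ σ + c x * u x ^ τ)
    (H₀ : ℝ) (hH₀0 : 0 ≤ H₀)
    (hH₀ : ∀ x, max 1 γ < u x → (max (a x) 0 + max (c x) 0) / b x ≤ H₀) :
    BddAbove (Set.range u) ∧
      ∀ x, u x ≤ max (max 1 γ) (H₀ ^ (1 / (σ - 1))) := by
  set K := max (max 1 γ) (H₀ ^ (1 / (σ - 1)))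
  have hγK : max 1 γ ≤ K := le_max_left _ _
  have hbound : ∀ x, u x ≤ K := by
    intro x
    refine le_of_forall_pos_le_add fun δ hδ => ?_
    have hL : 1 ≤ K + δ := by linarith [le_max_left 1 γ]
    have hβ : 0 < 1 - H₀ / (K + δ) ^ (σ - 1) := by
      rw [sub_pos, div_lt_one (rpow_pos_of_pos (by linarith) _),
        ← rpow_inv_lt_iff_of_pos hH₀0 (by linarith) (by linarith), ← one_div]
      linarith [le_max_right (max 1 γ) (H₀ ^ (1 / (σ - 1)))]
    obtain ⟨C', hC', hbR⟩ := exists_pos_mul_rpow_neg_le hb hbpos hC hμ0 hblow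
    refine le_of_laplacian_ge_mul_rpow hσ hβ (by linarith) hμ2 hC' hu (fun z hz => ?_) hbR x
    have hγz : max 1 γ < u z := by linarith
    rw [← lap_eq_laplacian]
    exact mul_rpow_le_of_lichnerowicz_ineq hσ hτ hH₀0 (hbpos z) hL hz
      (hineq z ((le_max_right 1 γ).trans_lt hγz)) (hH₀ z hγz)
  exact ⟨⟨K, forall_mem_range.2 hbound⟩, hbound⟩

/-- A priori upper bound for positive solutions of the Lichnerowicz differential
inequality on Euclidean space. -/
theorem lichnerowicz_apriori_upper_bound {m : ℕ} (hm : 1 ≤ m)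
    (a b c : EuclideanSpace ℝ (Fin m) → ℝ)
    (ha : Continuous a) (hb : Continuous b) (hc : Continuous c)
    (hbd : ∃ M : ℝ, ∀ x, max (a x) 0 + max (c x) 0 ≤ M)
    (hbpos : ∀ x, 0 < b x)
    (C R₀ μ : ℝ) (hC : 0 < C) (hR₀ : 0 < R₀) (hμ0 : 0 ≤ μ) (hμ2 : μ < 2)
    (hblow : ∀ x, R₀ ≤ ‖x‖ → C * ‖x‖ ^ (-μ) ≤ b x)
    (σ τ γ : ℝ) (hσ : 1 < σ) (hτ : τ < 1)
    (u : EuclideanSpace ℝ (Fin m) → ℝ) (hu : ContDiff ℝ 2 u) (hupos : ∀ x, 0 < u x)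
    (hineq : ∀ x, γ < u x →
      0 ≤ lap u x + a x * u x - b x * u x ^ σ + c x * u x ^ τ)
    (H₀ : ℝ) (hH₀0 : 0 ≤ H₀)
    (hH₀ : ∀ x, max 1 γ < u x → (max (a x) 0 + max (c x) 0) / b x ≤ H₀) :
    BddAbove (Set.range u) ∧
      ∀ x, u x ≤ max (max 1 γ) (H₀ ^ (1 / (σ - 1))) :=
  lichnerowicz_apriori_upper_bound_general a b c hb hbpos C R₀ μ hC hμ0 hμ2 hblow σ τ γ hσ hτ u hu
    hineq H₀ hH₀0 hH₀
end

section
/- Let m ≥ 1, let Ω ⊆ ℝ^m be a bounded open set, write E = ℝ^m ∖ closure(Ω). Let a, b, c : ℝ^m → ℝ be continuous with b(x) > 0 and c(x) ≥ 0 on ℝ^m ∖ Ω, sup_{x ∈ ℝ^m∖Ω} a₋(x)/b(x) < +∞ and sup_{x ∈ ℝ^m∖Ω} c(x)/b(x) < +∞, and let σ > 1, τ < 1. Let X : ℝ^m → ℝ^m be a continuous vector field and set Lw = Δw − ⟨X, ∇w⟩. Let u, v be positive functions on ℝ^m ∖ Ω, continuous there and C² on E, satisfying Lu + a(x)u − b(x)u^σ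 + c(x)u^τ ≥ 0 and Lv + a(x)v − b(x)v^σ + c(x)v^τ ≤ 0 on E, with liminf_{x→∞} v(x) > 0, limsup_{x→∞} u(x) < +∞, and 0 < u ≤ v on the boundary ∂Ω. Assume moreover that the (1/b)-weak maximum principle holds for L on E: for every C² function w on E with w* := sup_E w < +∞ and every γ < w*, one has inf over {x ∈ E : w(x) > γ} of (1/b(x))·Lw(x) ≤ 0. Then u(x) ≤ v(x) for all x ∈ ℝ^m ∖ Ω. -/
/-!
Let `θ ≥ 1` be the least multiplier with `u ≤ θ v` on `ℝ^m ∖ Ω`; it exists because the behaviour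
at infinity and continuity on compacta bound `u` from above and `v` from below by a positive
constant. If `θ > 1`, then `ζ = u - θ v ≤ 0` has supremum `0` on `E`, because `u ≤ v` on `∂Ω`.
Where `ζ` is close to `0` the ratio `u / v` is close to `θ`, so `θ^τ < θ < θ^σ` gives
`u^τ ≤ θ v^τ` and a uniform positive lower bound for `u^σ - θ v^σ`. Subtracting the two
differential inequalities then yields `(1/b) Lζ ≥ κ > 0` on a superlevel set of `ζ`,
contradicting the weak maximum principle.
-/

open Real Set

/-- The drift operator `L w = Δ w - ⟨X, ∇ w⟩`. -/
noncomputable def Lop {m : ℕ} (X : EuclideanSpace ℝ (Fin m) → EuclideanSpace ℝ (Fin m))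
    (w : EuclideanSpace ℝ (Fin m) → ℝ) (x : EuclideanSpace ℝ (Fin m)) : ℝ :=
  lap w x - (inner ℝ (X x) (gradient w x) : ℝ)

open Filter Topology

theorem gradient_sub_const_mul {F : Type*} [NormedAddCommGroup F] [InnerProductSpace ℝ F]
    [CompleteSpace F] {u v : F → ℝ} {x : F} (hu : DifferentiableAt ℝ u x)
    (hv : DifferentiableAt ℝ v x) (θ : ℝ) :
    gradient (fun y => u y - θ * v y) x = gradient u x - θ • gradient v x := by
  simp only [gradient, fderiv_fun_sub hu (hv.const_mul θ), fderiv_const_mul hv, map_sub,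
    map_smulₛₗ, RCLike.conj_to_real]

section DriftLaplacian

variable {m : ℕ} {u v : EuclideanSpace ℝ (Fin m) → ℝ} {x : EuclideanSpace ℝ (Fin m)}

theorem lap_sub_const_mul (hu : ContDiffAt ℝ 2 u x) (hv : ContDiffAt ℝ 2 v x) (θ : ℝ) :
    lap (fun y => u y - θ * v y) x = lap u x - θ * lap v x := by
  have h : iteratedFDeriv ℝ 2 (fun y => u y - θ * v y) x
      = iteratedFDeriv ℝ 2 u x - θ • iteratedFDeriv ℝ 2 v x := by
    change iteratedFDeriv ℝ 2 (u - fun y => θ • v y) x = _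
    rw [iteratedFDeriv_sub_apply hu (hv.const_smul θ), iteratedFDeriv_const_smul_apply' hv]
  simp only [lap, h, sub_apply, smul_apply,
    smul_eq_mul, Finset.sum_sub_distrib, Finset.mul_sum]

theorem Lop_sub_const_mul (X : EuclideanSpace ℝ (Fin m) → EuclideanSpace ℝ (Fin m))
    (hu : ContDiffAt ℝ 2 u x) (hv : ContDiffAt ℝ 2 v x) (θ : ℝ) :
    Lop X (fun y => u y - θ * v y) x = Lop X u x - θ * Lop X v x := by
  rw [Lop, Lop, Lop, lap_sub_const_mul hu hv,
    gradient_sub_const_mul (hu.differentiableAt (by norm_num))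
      (hv.differentiableAt (by norm_num)),
    inner_sub_right, real_inner_smul_right]
  ring

end DriftLaplacian

section CocompactBounds

variable {α : Type*} [TopologicalSpace α] {A : Set α} {f : α → ℝ}

theorem bddAbove_image_of_eventually_cocompact (hA : IsClosed A) (hf : ContinuousOn f A) {M : ℝ}
    (hM : ∀ᶠ x in cocompact α, f x ≤ M) : BddAbove (f '' A) := by
  obtain ⟨K, hK, hKM⟩ := mem_cocompact.mp hM
  refine ((hK.inter_right hA).bddAbove_image (hf.mono inter_subset_right)).union
    (bddAbove_Iic (a := M)) |>.mono ?_
  rintro _ ⟨x, hx, rfl⟩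
  by_cases hxK : x ∈ K
  · exact .inl ⟨x, ⟨hxK, hx⟩, rfl⟩
  · exact .inr (hKM hxK)

theorem exists_pos_le_of_eventually_cocompact (hA : IsClosed A) (hf : ContinuousOn f A)
    (hpos : ∀ x ∈ A, 0 < f x) (hε : ∃ ε > 0, ∀ᶠ x in cocompact α, ε ≤ f x) :
    ∃ ε > 0, ∀ x ∈ A, ε ≤ f x := by
  obtain ⟨ε, hε, hεf⟩ := hε
  obtain ⟨B, hB⟩ := bddAbove_image_of_eventually_cocompact hA
    (hf.inv₀ fun x hx => (hpos x hx).ne')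
    (hεf.mono fun x hx => inv_anti₀ hε hx)
  refine ⟨(max B 1)⁻¹, by positivity, fun x hx => ?_⟩
  rw [inv_le_comm₀ (by positivity) (hpos x hx)]
  exact (hB ⟨x, hx, rfl⟩).trans (le_max_left _ _)

end CocompactBounds

theorem exists_minimal_multiplier {α : Type*} {A E : Set α} {u v : α → ℝ} {ε : ℝ}
    (hu : BddAbove (u '' A)) (hε : 0 < ε) (hεv : ∀ x ∈ A, ε ≤ v x)
    (huv : ∀ x ∈ A, x ∉ E → u x ≤ v x) :
    ∃ θ ≥ 1, (∀ x ∈ A, u x ≤ θ * v x) ∧ (1 < θ → ∀ γ < 0, ∃ x ∈ E, γ < u x - θ * v x) := by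
  obtain ⟨U, hU₀, hU⟩ : ∃ U > 0, ∀ x ∈ A, u x ≤ U := by
    obtain ⟨U, hU⟩ := hu
    exact ⟨max U 1, by positivity, fun x hx => (hU ⟨x, hx, rfl⟩).trans (le_max_left _ _)⟩
  set T := {θ : ℝ | 1 ≤ θ ∧ ∀ x ∈ A, u x ≤ θ * v x}
  have hTne : max 1 (U / ε) ∈ T := by
    refine ⟨le_max_left _ _, fun x hx => ?_⟩
    calc u x ≤ U / ε * ε := by rw [div_mul_cancel₀ _ hε.ne']; exact hU x hx
      _ ≤ max 1 (U / ε) * v x :=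
        mul_le_mul (le_max_right _ _) (hεv x hx) hε.le (zero_le_one.trans (le_max_left _ _))
  have hTclosed : IsClosed T := by
    simp only [T, ofPred_and, ofPred_forall]
    exact isClosed_Ici.inter (isClosed_biInter fun x _ =>
      isClosed_le continuous_const (continuous_id.mul continuous_const))
  have hTbdd : BddBelow T := ⟨1, fun θ hθ => hθ.1⟩
  set θ := sInf T
  obtain ⟨hθ1, hθuv⟩ : θ ∈ T := hTclosed.csInf_mem ⟨_, hTne⟩ hTbdd
  refine ⟨θ, hθ1, hθuv, fun hθ γ hγ => ?_⟩
  by_contra! hζ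
  -- If `u - θ v ≤ γ` on `E`, then `θ` can be lowered by `-γ / U`.
  have hlower : max 1 (θ + γ / U) ∈ T := by
    refine ⟨le_max_left _ _, fun x hx => ?_⟩
    have hv : 0 < v x := hε.trans_le (hεv x hx)
    have hvθ : v x ≤ max 1 (θ + γ / U) * v x := le_mul_of_one_le_left hv.le (le_max_left _ _)
    by_cases hxE : x ∈ E
    · rcases le_total U (v x) with hUv | hvU
      · linarith [hU x hx]
      · have hγv : γ ≤ γ / U * v x := by
          rw [div_mul_eq_mul_div, le_div_iff₀ hU₀]; nlinarith
        nlinarith [hζ x hxE, le_max_right 1 (θ + γ / U)]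
    · exact (huv x hx hxE).trans hvθ
  have hγU : γ / U < 0 := div_neg_of_neg_of_pos hγ hU₀
  exact (max_lt hθ (by linarith)).not_ge (csInf_le hTbdd hlower)

theorem eventually_rpow_gap {θ σ τ : ℝ} (hθ : 1 < θ) (hσ : 1 < σ) (hτ : τ < 1) :
    ∃ c > 0, ∀ᶠ s in 𝓝 θ, 0 < s ∧ θ + c < s ^ σ ∧ s ^ τ < θ := by
  have hθ0 : 0 < θ := one_pos.trans hθ
  have hσθ : θ < θ ^ σ := by simpa using rpow_lt_rpow_of_exponent_lt hθ hσ
  have hτθ : θ ^ τ < θ := by simpa using rpow_lt_rpow_of_exponent_lt hθ hτ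
  refine ⟨(θ ^ σ - θ) / 2, by linarith, (lt_mem_nhds hθ0).and (.and ?_ ?_)⟩
  · exact (continuousAt_rpow_const θ σ (.inl hθ0.ne')).eventually (lt_mem_nhds (by linarith))
  · exact (continuousAt_rpow_const θ τ (.inl hθ0.ne')).eventually (gt_mem_nhds hτθ)

theorem exists_rpow_gap {θ σ τ ε : ℝ} (hθ : 1 < θ) (hσ : 1 < σ) (hτ : τ < 1) (hε : 0 < ε)
    (K : ℝ) : ∃ η > 0, ∃ κ > 0, ∀ p q, ε ≤ q → -η < p - θ * q → p ≤ θ * q →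
      κ + K * η ≤ p ^ σ - θ * q ^ σ ∧ p ^ τ ≤ θ * q ^ τ := by
  obtain ⟨c, hc, hgap⟩ := eventually_rpow_gap hθ hσ hτ
  obtain ⟨ρ, hρ, hρgap⟩ := Metric.eventually_nhds_iff.mp hgap
  set κ := c * ε ^ σ / 2
  set η := min (ρ * ε) (κ / (|K| + 1))
  have hκ : 0 < κ := by positivity
  have hKη : K * η ≤ κ := calc
    K * η ≤ |K| * (κ / (|K| + 1)) :=
      (le_abs_self K |> mul_le_mul_of_nonneg_right <| by positivity).trans
        (mul_le_mul_of_nonneg_left (min_le_right _ _) (abs_nonneg K))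
    _ ≤ κ := by
      rw [mul_div_assoc', div_le_iff₀ (by positivity)]; nlinarith
  refine ⟨η, by positivity, κ, hκ, fun p q hq hη hpq => ?_⟩
  have hq0 : 0 < q := hε.trans_le hq
  -- The ratio `p / q` is `ρ`-close to `θ`, where the gap is uniform; homogeneity does the rest.
  obtain ⟨hs0, hsσ, hsτ⟩ : 0 < p / q ∧ θ + c < (p / q) ^ σ ∧ (p / q) ^ τ < θ := by
    refine hρgap (abs_sub_lt_iff.mpr ⟨?_, ?_⟩)
    · rw [div_sub' hq0.ne', div_lt_iff₀ hq0]; nlinarith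
    · rw [sub_div' hq0.ne', div_lt_iff₀ hq0]; nlinarith [min_le_left (ρ * ε) (κ / (|K| + 1))]
  have hp : p = p / q * q := (div_mul_cancel₀ p hq0.ne').symm
  rw [hp, mul_rpow hs0.le hq0.le, mul_rpow hs0.le hq0.le]
  constructor
  · calc κ + K * η ≤ c * ε ^ σ := by linarith [show κ = c * ε ^ σ / 2 from rfl]
      _ ≤ c * q ^ σ := by gcongr
      _ ≤ ((p / q) ^ σ - θ) * q ^ σ := by gcongr; linarith
      _ = _ := by ring
  · nlinarith [rpow_pos_of_pos hq0 τ]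

theorem le_one_div_mul_sub_of_reaction {a b c σ τ θ p q Lp Lq M η κ : ℝ} (hb : 0 < b)
    (hc : 0 ≤ c) (hM : -min a 0 / b ≤ M) (hθ : 0 ≤ θ)
    (hp : 0 ≤ Lp + a * p - b * p ^ σ + c * p ^ τ)
    (hq : Lq + a * q - b * q ^ σ + c * q ^ τ ≤ 0)
    (hη : -η < p - θ * q) (hpq : p - θ * q ≤ 0)
    (hσ : κ + M * η ≤ p ^ σ - θ * q ^ σ) (hτ : p ^ τ ≤ θ * q ^ τ) :
    κ ≤ 1 / b * (Lp - θ * Lq) := by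
  have hMb : -min a 0 ≤ M * b := (div_le_iff₀ hb).mp hM
  -- As `-η < p - θ q ≤ 0`, the linear term costs at most `a₋ η ≤ M b η`.
  have hlin : -(M * b * η) ≤ -(a * (p - θ * q)) := by
    rcases le_total 0 a with ha | ha
    · rw [min_eq_right ha] at hMb
      nlinarith
    · rw [min_eq_left ha] at hMb
      nlinarith
  have hθq : θ * (Lq + a * q - b * q ^ σ + c * q ^ τ) ≤ 0 := mul_nonpos_of_nonneg_of_nonpos hθ hq
  rw [one_div_mul_eq_div, le_div_iff₀ hb]
  nlinarith [mul_le_mul_of_nonneg_left hσ hb.le, mul_le_mul_of_nonneg_left hτ hc]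

theorem lichnerowicz_exterior_comparison_general {m : ℕ}
    (Ω : Set (EuclideanSpace ℝ (Fin m))) (hΩo : IsOpen Ω)
    (E : Set (EuclideanSpace ℝ (Fin m))) (hE : E = (closure Ω)ᶜ)
    (a b c : EuclideanSpace ℝ (Fin m) → ℝ)
    (hbpos : ∀ x ∈ Ωᶜ, 0 < b x) (hcpos : ∀ x ∈ Ωᶜ, 0 ≤ c x)
    (hab : ∃ M : ℝ, ∀ x ∈ Ωᶜ, (-min (a x) 0) / b x ≤ M)
    (σ τ : ℝ) (hσ : 1 < σ) (hτ : τ < 1)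
    (X : EuclideanSpace ℝ (Fin m) → EuclideanSpace ℝ (Fin m))
    (u v : EuclideanSpace ℝ (Fin m) → ℝ)
    (hucont : ContinuousOn u Ωᶜ) (hvcont : ContinuousOn v Ωᶜ)
    (huC2 : ContDiffOn ℝ 2 u E) (hvC2 : ContDiffOn ℝ 2 v E)
    (hvpos : ∀ x ∈ Ωᶜ, 0 < v x)
    (husub : ∀ x ∈ E, 0 ≤ Lop X u x + a x * u x - b x * u x ^ σ + c x * u x ^ τ)
    (hvsup : ∀ x ∈ E, Lop X v x + a x * v x - b x * v x ^ σ + c x * v x ^ τ ≤ 0)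
    (hvliminf : ∃ ε > 0, ∀ᶠ x in Filter.cocompact (EuclideanSpace ℝ (Fin m)), ε ≤ v x)
    (hulimsup : ∃ M : ℝ, ∀ᶠ x in Filter.cocompact (EuclideanSpace ℝ (Fin m)), u x ≤ M)
    (hbdry : ∀ x ∈ frontier Ω, 0 < u x ∧ u x ≤ v x)
    (hWMP : ∀ w : EuclideanSpace ℝ (Fin m) → ℝ, ContDiffOn ℝ 2 w E →
      BddAbove (w '' E) → ∀ γ < sSup (w '' E),
        sInf ((fun x => (1 / b x) * Lop X w x) '' {x ∈ E | γ < w x}) ≤ 0) :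
    ∀ x ∈ Ωᶜ, u x ≤ v x := by
  have hEo : IsOpen E := hE ▸ isClosed_closure.isOpen_compl
  have hEΩ : E ⊆ Ωᶜ := hE ▸ compl_subset_compl.mpr subset_closure
  obtain ⟨M, hM⟩ := hab
  obtain ⟨U, hU⟩ := hulimsup
  obtain ⟨ε, hε, hεv⟩ :=
    exists_pos_le_of_eventually_cocompact hΩo.isClosed_compl hvcont hvpos hvliminf
  obtain ⟨θ, hθ1, huθv, hθ⟩ := exists_minimal_multiplier (E := E)
    (bddAbove_image_of_eventually_cocompact hΩo.isClosed_compl hucont hU) hε hεv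
    fun x hx hxE => (hbdry x (hΩo.frontier_eq ▸ ⟨by simpa [hE] using hxE, hx⟩)).2
  suffices θ ≤ 1 from fun x hx => (huθv x hx).trans (by nlinarith [hvpos x hx])
  by_contra! hθ1
  obtain ⟨η, hη, κ, hκ, hgap⟩ := exists_rpow_gap hθ1 hσ hτ hε M
  set ζ := fun y => u y - θ * v y
  have hζ : ∀ x ∈ E, ζ x ≤ 0 := fun x hx => sub_nonpos.mpr (huθv x (hEΩ hx))
  have hζbdd : BddAbove (ζ '' E) := ⟨0, forall_mem_image.mpr hζ⟩
  have hLζ : ∀ x ∈ E, -η < ζ x → κ ≤ 1 / b x * Lop X ζ x := fun x hx hxη => by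
    have hxΩ := hEΩ hx
    rw [Lop_sub_const_mul X (huC2.contDiffAt (hEo.mem_nhds hx))
      (hvC2.contDiffAt (hEo.mem_nhds hx))]
    obtain ⟨hσgap, hτgap⟩ := hgap _ _ (hεv x hxΩ) hxη (sub_nonpos.mp (hζ x hx))
    exact le_one_div_mul_sub_of_reaction (hbpos x hxΩ) (hcpos x hxΩ) (hM x hxΩ) (by linarith)
      (husub x hx) (hvsup x hx) hxη (hζ x hx) hσgap hτgap
  obtain ⟨x₀, hx₀, hx₀η⟩ := hθ hθ1 (-η) (neg_neg_of_pos hη)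
  have hWMPζ := hWMP ζ (huC2.sub (contDiffOn_const.mul hvC2)) hζbdd (-η)
    (hx₀η.trans_le (le_csSup hζbdd ⟨x₀, hx₀, rfl⟩))
  exact hWMPζ.not_gt <| hκ.trans_le <|
    le_csInf ⟨_, x₀, ⟨hx₀, hx₀η⟩, rfl⟩ (forall_mem_image.mpr fun x hx => hLζ x hx.1 hx.2)

/-- Comparison theorem on an exterior domain, under the (1/b)-weak maximum
principle for `L = Δ - ⟨X, ∇·⟩`. -/
theorem lichnerowicz_exterior_comparison {m : ℕ} (hm : 1 ≤ m)
    (Ω : Set (EuclideanSpace ℝ (Fin m))) (hΩo : IsOpen Ω) (hΩb : Bornology.IsBounded Ω)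
    (E : Set (EuclideanSpace ℝ (Fin m))) (hE : E = (closure Ω)ᶜ)
    (a b c : EuclideanSpace ℝ (Fin m) → ℝ)
    (ha : Continuous a) (hb : Continuous b) (hc : Continuous c)
    (hbpos : ∀ x ∈ Ωᶜ, 0 < b x) (hcpos : ∀ x ∈ Ωᶜ, 0 ≤ c x)
    (hab : ∃ M : ℝ, ∀ x ∈ Ωᶜ, (-min (a x) 0) / b x ≤ M)
    (hcb : ∃ M : ℝ, ∀ x ∈ Ωᶜ, c x / b x ≤ M)
    (σ τ : ℝ) (hσ : 1 < σ) (hτ : τ < 1)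
    (X : EuclideanSpace ℝ (Fin m) → EuclideanSpace ℝ (Fin m)) (hX : Continuous X)
    (u v : EuclideanSpace ℝ (Fin m) → ℝ)
    (hucont : ContinuousOn u Ωᶜ) (hvcont : ContinuousOn v Ωᶜ)
    (huC2 : ContDiffOn ℝ 2 u E) (hvC2 : ContDiffOn ℝ 2 v E)
    (hupos : ∀ x ∈ Ωᶜ, 0 < u x) (hvpos : ∀ x ∈ Ωᶜ, 0 < v x)
    (husub : ∀ x ∈ E, 0 ≤ Lop X u x + a x * u x - b x * u x ^ σ + c x * u x ^ τ)
    (hvsup : ∀ x ∈ E, Lop X v x + a x * v x - b x * v x ^ σ + c x * v x ^ τ ≤ 0)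
    (hvliminf : ∃ ε > 0, ∀ᶠ x in Filter.cocompact (EuclideanSpace ℝ (Fin m)), ε ≤ v x)
    (hulimsup : ∃ M : ℝ, ∀ᶠ x in Filter.cocompact (EuclideanSpace ℝ (Fin m)), u x ≤ M)
    (hbdry : ∀ x ∈ frontier Ω, 0 < u x ∧ u x ≤ v x)
    (hWMP : ∀ w : EuclideanSpace ℝ (Fin m) → ℝ, ContDiffOn ℝ 2 w E →
      BddAbove (w '' E) → ∀ γ < sSup (w '' E),
        sInf ((fun x => (1 / b x) * Lop X w x) '' {x ∈ E | γ < w x}) ≤ 0) :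
    ∀ x ∈ Ωᶜ, u x ≤ v x :=
  lichnerowicz_exterior_comparison_general Ω hΩo E hE a b c hbpos hcpos hab σ τ hσ hτ X u v hucont
    hvcont huC2 hvC2 hvpos husub hvsup hvliminf hulimsup hbdry hWMP
end

section
/- Let m ≥ 1, q ∈ ℝ^m, and 0 < T̃ < T. Let Ω be a subset of the open ball B(q, T̃), and let a, b, c : ℝ^m → ℝ be continuous on the closed ball B̄(q,T), with b(x) > 0 and c(x) ≥ 0 on B̄(q,T), and let σ > 1, τ < 1. Then there exists a constant C > 0, independent of u, such that every positive function u which is C² on the closed ball B̄(q,T) and satisfies Δu + a(x)u − b(x)u^σ + c(x)u^τ ≥ 0 on B(q,T) obeys sup_Ω u ≤ C. -/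
/-!
With `κ = 2 / (σ - 1)`, the function `F = (T² - |x - q|²)^κ u` is continuous on the closed ball,
vanishes on its boundary and is positive at `q`, so it attains its maximum at an interior point
`x₀`. There the first and second derivative tests along the coordinate lines bound
`(T² - |x₀ - q|²)² Δu(x₀)` by a multiple of `u(x₀)` that depends only on `T`, `κ` and `m`.
Multiplying the differential inequality at `x₀` by `(T² - |x₀ - q|²)^(κ + 2)`, and using
`κσ = κ + 2`, gives `b₀ F(x₀)^σ ≤ K₁ F(x₀) + K₂ F(x₀)^τ` with constants independent of `u`;
since `τ < 1 < σ` this bounds `F(x₀)`, hence `F`, hence `u` on `B(q, T')`.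
-/

open Real Set Metric

open Filter Topology
open scoped RealInnerProductSpace

theorem IsLocalMax.snd_deriv_nonpos {f f' : ℝ → ℝ} {f'' x : ℝ} (h : IsLocalMax f x)
    (hf : ∀ᶠ y in 𝓝 x, HasDerivAt f (f' y) y) (hf' : HasDerivAt f' f'' x) : f'' ≤ 0 := by
  by_contra! hpos
  have hf'_eq : f' =ᶠ[𝓝 x] deriv f := hf.mono fun y hy => hy.deriv.symm
  have hmin : IsLocalMin f x := by
    refine isLocalMin_of_deriv_deriv_pos ?_ ?_ hf.self_of_nhds.continuousAt
    · rwa [← hf'_eq.deriv_eq, hf'.deriv]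
    · rw [← hf'_eq.self_of_nhds]; exact h.hasDerivAt_eq_zero hf.self_of_nhds
  have hconst : f =ᶠ[𝓝 x] fun _ => f x := h.mp (hmin.mono fun y h₁ h₂ => le_antisymm h₂ h₁)
  have hzero : f' =ᶠ[𝓝 x] fun _ => 0 := by
    filter_upwards [hconst.eventuallyEq_nhds, hf] with y hy hy'
    exact hy'.unique ((hasDerivAt_const y (f x)).congr_of_eventuallyEq hy)
  exact hpos.ne' (hf'.unique ((hasDerivAt_const x 0).congr_of_eventuallyEq hzero))

section ProductAtMax

variable {W W' U U' : ℝ → ℝ} {W'' U'' x : ℝ}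

theorem IsLocalMax.sq_mul_snd_deriv_le_of_mul (h : IsLocalMax (fun t => W t * U t) x)
    (hW : ∀ᶠ t in 𝓝 x, HasDerivAt W (W' t) t) (hW' : HasDerivAt W' W'' x)
    (hU : ∀ᶠ t in 𝓝 x, HasDerivAt U (U' t) t) (hU' : HasDerivAt U' U'' x) (hW₀ : 0 ≤ W x) :
    W x ^ 2 * U'' ≤ U x * (2 * W' x ^ 2 - W x * W'') := by
  have hg : ∀ᶠ t in 𝓝 x, HasDerivAt (fun t => W t * U t) (W' t * U t + W t * U' t) t :=
    (hW.and hU).mono fun t ht => ht.1.mul ht.2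
  have hcrit : W' x * U x + W x * U' x = 0 := h.hasDerivAt_eq_zero hg.self_of_nhds
  have hsnd : W'' * U x + W' x * U' x + (W' x * U' x + W x * U'') ≤ 0 :=
    h.snd_deriv_nonpos hg ((hW'.mul hU.self_of_nhds).add (hW.self_of_nhds.mul hU'))
  linear_combination mul_nonpos_of_nonneg_of_nonpos hW₀ hsnd - 2 * W' x * hcrit

variable {p p' : ℝ → ℝ} {p'' κ : ℝ}

theorem IsLocalMax.sq_mul_snd_deriv_le_of_rpow_mul (h : IsLocalMax (fun t => p t ^ κ * U t) x)
    (hp : ∀ᶠ t in 𝓝 x, HasDerivAt p (p' t) t) (hp' : HasDerivAt p' p'' x)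
    (hU : ∀ᶠ t in 𝓝 x, HasDerivAt U (U' t) t) (hU' : HasDerivAt U' U'' x) (hp₀ : 0 < p x) :
    p x ^ 2 * U'' ≤ κ * U x * ((κ + 1) * p' x ^ 2 - p x * p'') := by
  have hpos : ∀ᶠ t in 𝓝 x, 0 < p t :=
    hp.self_of_nhds.continuousAt.eventually (lt_mem_nhds hp₀)
  have hW : ∀ᶠ t in 𝓝 x, HasDerivAt (fun t => p t ^ κ) (p' t * κ * p t ^ (κ - 1)) t :=
    (hp.and hpos).mono fun t ht => ht.1.rpow_const (Or.inl ht.2.ne')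
  have hW' : HasDerivAt (fun t => p' t * κ * p t ^ (κ - 1))
      (p'' * κ * p x ^ (κ - 1) + p' x * κ * (p' x * (κ - 1) * p x ^ (κ - 1 - 1))) x :=
    (hp'.mul_const κ).mul (hp.self_of_nhds.rpow_const (Or.inl hp₀.ne'))
  have key := h.sq_mul_snd_deriv_le_of_mul hW hW' hU hU' (rpow_nonneg hp₀.le κ)
  set P := p x ^ (κ - 2) with hP
  have h₁ : p x ^ (κ - 1) = P * p x := by
    rw [hP, ← rpow_add_one hp₀.ne']; ring_nf
  have h₂ : p x ^ κ = P * p x ^ 2 := by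
    rw [hP, ← rpow_add_natCast hp₀.ne']; ring_nf
  rw [h₁, h₂, show κ - 1 - 1 = κ - 2 by ring] at key
  -- `key` is the claim multiplied by `P² (p x)²`
  have hscale : 0 < P ^ 2 * p x ^ 2 := by positivity
  refine le_of_mul_le_mul_left ?_ hscale
  linear_combination key

end ProductAtMax

section Line

variable {E F : Type*} [NormedAddCommGroup E] [NormedSpace ℝ E]
  [NormedAddCommGroup F] [NormedSpace ℝ F] {u : E → F} {x e : E}

theorem DifferentiableAt.hasDerivAt_comp_add_smul {t : ℝ}
    (hu : DifferentiableAt ℝ u (x + t • e)) :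
    HasDerivAt (fun t : ℝ => u (x + t • e)) (fderiv ℝ u (x + t • e) e) t := by
  have hline : HasDerivAt (fun t : ℝ => x + t • e) e t := by
    simpa using ((hasDerivAt_id t).smul_const e).const_add x
  exact hu.hasFDerivAt.comp_hasDerivAt t hline

theorem ContDiffAt.eventually_hasDerivAt_comp_add_smul (hu : ContDiffAt ℝ 2 u x) :
    ∀ᶠ t in 𝓝 0, HasDerivAt (fun t : ℝ => u (x + t • e)) (fderiv ℝ u (x + t • e) e) t := by
  have hline : Tendsto (fun t : ℝ => x + t • e) (𝓝 0) (𝓝 x) := by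
    simpa using ((continuous_id.smul continuous_const).const_add x).tendsto (0 : ℝ)
  filter_upwards [hline.eventually (hu.eventually (by simp))] with t ht
  exact (ht.differentiableAt (by simp)).hasDerivAt_comp_add_smul

theorem ContDiffAt.hasDerivAt_fderiv_comp_add_smul (hu : ContDiffAt ℝ 2 u x) :
    HasDerivAt (fun t : ℝ => fderiv ℝ u (x + t • e) e) (iteratedFDeriv ℝ 2 u x ![e, e]) 0 := by
  have hdiff : DifferentiableAt ℝ (fderiv ℝ u) x :=
    (hu.fderiv_right (m := 1) le_rfl).differentiableAt one_ne_zero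
  have hdiff_e := (show x = x + (0 : ℝ) • e by simp) ▸ hdiff.clm_apply (differentiableAt_const e)
  convert hdiff_e.hasDerivAt_comp_add_smul using 1
  simp [iteratedFDeriv_two_apply, fderiv_clm_apply hdiff (differentiableAt_const e)]

end Line

section BallWeight

variable {X : Type*} [PseudoMetricSpace X]

noncomputable def ballWeight (q : X) (T κ : ℝ) (x : X) : ℝ := (T ^ 2 - dist x q ^ 2) ^ κ

theorem continuous_ballWeight (q : X) (T : ℝ) {κ : ℝ} (hκ : 0 ≤ κ) :
    Continuous (ballWeight q T κ) :=
  Continuous.rpow_const (by fun_prop) fun _ => Or.inr hκ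

theorem rpow_le_ballWeight {q x : X} {T T' κ : ℝ} (hT' : 0 ≤ T') (hT'T : T' ≤ T)
    (hx : dist x q ≤ T') (hκ : 0 ≤ κ) : (T ^ 2 - T' ^ 2) ^ κ ≤ ballWeight q T κ x :=
  rpow_le_rpow (sub_nonneg.2 (pow_le_pow_left₀ hT' hT'T 2))
    (sub_le_sub_left (pow_le_pow_left₀ dist_nonneg hx 2) _) hκ

theorem dist_lt_of_isMaxOn_ballWeight_mul {u : X → ℝ} {q x : X} {T κ : ℝ} (hκ : 0 < κ)
    (hT : 0 < T) (hu : ∀ y ∈ closedBall q T, 0 < u y)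
    (h : IsMaxOn (fun y => ballWeight q T κ y * u y) (closedBall q T) x)
    (hx : x ∈ closedBall q T) : dist x q < T := by
  by_contra! hxT
  have hq : q ∈ closedBall q T := mem_closedBall_self hT.le
  have hwx : ballWeight q T κ x = 0 := by
    rw [ballWeight, le_antisymm (mem_closedBall.1 hx) hxT, sub_self, zero_rpow hκ.ne']
  have hwq : 0 < ballWeight q T κ q := by
    rw [ballWeight, dist_self]; exact rpow_pos_of_pos (by simpa using pow_pos hT 2) κ
  have hle : ballWeight q T κ q * u q ≤ ballWeight q T κ x * u x := h hq
  rw [hwx, zero_mul] at hle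
  exact hle.not_gt (mul_pos hwq (hu q hq))

theorem exists_isLocalMax_ballWeight_mul [ProperSpace X] {u : X → ℝ} {q : X} {T κ : ℝ}
    (hκ : 0 < κ) (hT : 0 < T) (hu : ContinuousOn u (closedBall q T))
    (hupos : ∀ y ∈ closedBall q T, 0 < u y) :
    ∃ x₀, dist x₀ q < T ∧ IsLocalMax (fun y => ballWeight q T κ y * u y) x₀ ∧
      ∀ y ∈ closedBall q T, ballWeight q T κ y * u y ≤ ballWeight q T κ x₀ * u x₀ := by
  obtain ⟨x₀, hx₀, hmax⟩ := (isCompact_closedBall q T).exists_isMaxOn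
    ⟨q, mem_closedBall_self hT.le⟩ ((continuous_ballWeight q T hκ.le).continuousOn.mul hu)
  have hx₀T := dist_lt_of_isMaxOn_ballWeight_mul hκ hT hupos hmax hx₀
  exact ⟨x₀, hx₀T, hmax.isLocalMax (closedBall_mem_nhds_of_mem hx₀T), fun y hy => hmax hy⟩

end BallWeight

section InnerProductSpace

variable {E : Type*} [NormedAddCommGroup E] [InnerProductSpace ℝ E]

theorem dist_add_smul_sq (x e q : E) (t : ℝ) :
    dist (x + t • e) q ^ 2 = dist x q ^ 2 + 2 * t * ⟪x - q, e⟫ + t ^ 2 * ‖e‖ ^ 2 := by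
  rw [dist_eq_norm, dist_eq_norm, show x + t • e - q = (x - q) + t • e by abel,
    norm_add_sq_real, real_inner_smul_right, norm_smul, mul_pow, Real.norm_eq_abs, sq_abs]
  ring

theorem IsLocalMax.sq_mul_iteratedFDeriv_le_of_ballWeight_mul {u : E → ℝ} {q x : E} {T κ : ℝ}
    (h : IsLocalMax (fun y => ballWeight q T κ y * u y) x) (hu : ContDiffAt ℝ 2 u x)
    (hx : dist x q < T) (e : E) :
    (T ^ 2 - dist x q ^ 2) ^ 2 * iteratedFDeriv ℝ 2 u x ![e, e] ≤
      κ * u x * (4 * (κ + 1) * ⟪x - q, e⟫ ^ 2 + 2 * ‖e‖ ^ 2 * (T ^ 2 - dist x q ^ 2)) := by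
  set η := T ^ 2 - dist x q ^ 2
  set d := ⟪x - q, e⟫
  set p : ℝ → ℝ := fun t => T ^ 2 - dist (x + t • e) q ^ 2
  have hp_eq : p = fun t => η - 2 * d * t - ‖e‖ ^ 2 * t ^ 2 := by
    funext t; simp only [p, η, d, dist_add_smul_sq]; ring
  have hp : ∀ t, HasDerivAt p (-2 * d - 2 * ‖e‖ ^ 2 * t) t := by
    intro t; rw [hp_eq]
    exact ((((hasDerivAt_id t).const_mul (2 * d)).const_sub η).sub
      ((hasDerivAt_pow 2 t).const_mul (‖e‖ ^ 2))).congr_deriv (by norm_num; ring)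
  have hp' : HasDerivAt (fun t => -2 * d - 2 * ‖e‖ ^ 2 * t) (-2 * ‖e‖ ^ 2) 0 := by
    simpa using ((hasDerivAt_id (0 : ℝ)).const_mul (2 * ‖e‖ ^ 2)).const_sub (-2 * d)
  have hp₀ : p 0 = η := by simp [p, η]
  have hη : 0 < η := by
    have := pow_lt_pow_left₀ hx dist_nonneg two_ne_zero
    simp only [η]; linarith
  have hline : IsLocalMax (fun t : ℝ => p t ^ κ * u (x + t • e)) 0 := by
    have hcont : ContinuousAt (fun t : ℝ => x + t • e) 0 := by fun_prop
    have h' : IsLocalMax (fun y => ballWeight q T κ y * u y) (x + (0 : ℝ) • e) := by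
      rwa [zero_smul, add_zero]
    exact IsLocalMax.comp_continuous (g := fun t : ℝ => x + t • e) h' hcont
  have := hline.sq_mul_snd_deriv_le_of_rpow_mul (Eventually.of_forall hp) hp'
    hu.eventually_hasDerivAt_comp_add_smul hu.hasDerivAt_fderiv_comp_add_smul (hp₀ ▸ hη)
  rw [hp₀] at this
  convert this using 2
  · simp
  · ring

end InnerProductSpace

theorem IsLocalMax.sq_mul_lap_le_of_ballWeight_mul {m : ℕ} {u : EuclideanSpace ℝ (Fin m) → ℝ}
    {q x : EuclideanSpace ℝ (Fin m)} {T κ : ℝ}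
    (h : IsLocalMax (fun y => ballWeight q T κ y * u y) x) (hu : ContDiffAt ℝ 2 u x)
    (hx : dist x q < T) :
    (T ^ 2 - dist x q ^ 2) ^ 2 * lap u x ≤
      κ * u x * (4 * (κ + 1) * dist x q ^ 2 + 2 * m * (T ^ 2 - dist x q ^ 2)) := by
  have hsum : ∑ i : Fin m, ⟪x - q, EuclideanSpace.single i 1⟫ ^ 2 = dist x q ^ 2 := by
    simpa [dist_eq_norm] using (EuclideanSpace.basisFun (Fin m) ℝ).sum_sq_inner_left (x - q)
  calc (T ^ 2 - dist x q ^ 2) ^ 2 * lap u x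
      ≤ ∑ i : Fin m, κ * u x * (4 * (κ + 1) * ⟪x - q, EuclideanSpace.single i 1⟫ ^ 2 +
          2 * ‖EuclideanSpace.single i (1 : ℝ)‖ ^ 2 * (T ^ 2 - dist x q ^ 2)) := by
        rw [lap, Finset.mul_sum]
        exact Finset.sum_le_sum fun i _ =>
          h.sq_mul_iteratedFDeriv_le_of_ballWeight_mul hu hx _
    _ = κ * u x * (4 * (κ + 1) * dist x q ^ 2 + 2 * m * (T ^ 2 - dist x q ^ 2)) := by
        simp only [PiLp.norm_single, norm_one, one_pow, mul_one]
        rw [← Finset.mul_sum, Finset.sum_add_distrib, ← Finset.mul_sum, hsum, Finset.sum_const,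
          Finset.card_univ, Fintype.card_fin, nsmul_eq_mul]
        ring

theorem le_max_one_rpow_of_mul_rpow_le {F b K₁ K₂ σ τ : ℝ} (hb : 0 < b) (hσ : 1 < σ)
    (hτ : τ ≤ 1) (hK₂ : 0 ≤ K₂) (h : b * F ^ σ ≤ K₁ * F + K₂ * F ^ τ) :
    F ≤ max 1 (((K₁ + K₂) / b) ^ (σ - 1)⁻¹) := by
  rcases le_or_gt F 1 with hF | hF
  · exact le_max_of_le_left hF
  have hF₀ : 0 < F := one_pos.trans hF
  have hFτ : F ^ τ ≤ F := by
    simpa using rpow_le_rpow_of_exponent_le hF.le hτ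
  have hFσ : F ^ σ = F ^ (σ - 1) * F := by
    rw [← rpow_add_one hF₀.ne']; ring_nf
  have hpow : F ^ (σ - 1) ≤ (K₁ + K₂) / b := by
    rw [le_div_iff₀ hb]
    refine le_of_mul_le_mul_right ?_ hF₀
    nlinarith [mul_le_mul_of_nonneg_left hFτ hK₂]
  refine le_max_of_le_right ((le_rpow_inv_iff_of_pos hF₀.le ?_ (by linarith)).2 hpow)
  exact (rpow_nonneg hF₀.le _).trans hpow

theorem mul_rpow_le_of_coeff_le {v L a a₁ b b₀ c c₁ σ τ : ℝ} (hv : 0 < v)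
    (h : 0 ≤ L + a * v - b * v ^ σ + c * v ^ τ) (ha : a ≤ a₁) (hb : b₀ ≤ b) (hc : c ≤ c₁) :
    b₀ * v ^ σ ≤ L + a₁ * v + c₁ * v ^ τ := by
  have hb' := mul_le_mul_of_nonneg_right hb (rpow_pos_of_pos hv σ).le
  have ha' := mul_le_mul_of_nonneg_right ha hv.le
  have hc' := mul_le_mul_of_nonneg_right hc (rpow_pos_of_pos hv τ).le
  linarith

theorem mul_rpow_le_of_lichnerowicz {η S v L B a₁ b₀ c₁ κ σ τ : ℝ} (hη : 0 < η) (hηS : η ≤ S)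
    (hv : 0 < v) (ha₁ : 0 ≤ a₁) (hc₁ : 0 ≤ c₁) (hκ : 0 ≤ κ) (hτ : τ ≤ 1)
    (hκσ : κ * σ = κ + 2) (hL : η ^ 2 * L ≤ B * v)
    (hineq : b₀ * v ^ σ ≤ L + a₁ * v + c₁ * v ^ τ) :
    b₀ * (η ^ κ * v) ^ σ ≤
      (B + a₁ * S ^ 2) * (η ^ κ * v) + c₁ * S ^ (κ * (1 - τ) + 2) * (η ^ κ * v) ^ τ := by
  have hFσ : (η ^ κ * v) ^ σ = η ^ κ * η ^ 2 * v ^ σ := by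
    rw [mul_rpow (by positivity) hv.le, ← rpow_mul hη.le, hκσ, rpow_add hη, rpow_two]
  have hFτ : η ^ κ * η ^ 2 * v ^ τ = η ^ (κ * (1 - τ) + 2) * (η ^ κ * v) ^ τ := by
    rw [mul_rpow (by positivity) hv.le, ← rpow_mul hη.le, ← mul_assoc, ← rpow_add hη,
      show κ * (1 - τ) + 2 + κ * τ = κ + 2 by ring, rpow_add hη, rpow_two]
  have hexp : 0 ≤ κ * (1 - τ) + 2 := by nlinarith
  calc b₀ * (η ^ κ * v) ^ σ = η ^ κ * η ^ 2 * (b₀ * v ^ σ) := by rw [hFσ]; ring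
    _ ≤ η ^ κ * η ^ 2 * (L + a₁ * v + c₁ * v ^ τ) := by gcongr
    _ = η ^ κ * (η ^ 2 * L) + a₁ * η ^ 2 * (η ^ κ * v) +
          c₁ * η ^ (κ * (1 - τ) + 2) * (η ^ κ * v) ^ τ := by
        rw [mul_assoc c₁, ← hFτ]; ring
    _ ≤ η ^ κ * (B * v) + a₁ * S ^ 2 * (η ^ κ * v) +
          c₁ * S ^ (κ * (1 - τ) + 2) * (η ^ κ * v) ^ τ := by
        gcongr
    _ = (B + a₁ * S ^ 2) * (η ^ κ * v) + c₁ * S ^ (κ * (1 - τ) + 2) * (η ^ κ * v) ^ τ := by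
        ring

theorem exists_ballWeight_mul_le_of_isLocalMax (m : ℕ) (q : EuclideanSpace ℝ (Fin m))
    {T σ τ a₁ b₀ c₁ : ℝ} (hσ : 1 < σ) (hτ : τ < 1) (hb₀ : 0 < b₀) (ha₁ : 0 ≤ a₁)
    (hc₁ : 0 ≤ c₁) :
    ∃ M, ∀ (u : EuclideanSpace ℝ (Fin m) → ℝ) (x : EuclideanSpace ℝ (Fin m)),
      IsLocalMax (fun y => ballWeight q T (2 / (σ - 1)) y * u y) x → ContDiffAt ℝ 2 u x →
      dist x q < T → 0 < u x → b₀ * u x ^ σ ≤ lap u x + a₁ * u x + c₁ * u x ^ τ →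
      ballWeight q T (2 / (σ - 1)) x * u x ≤ M := by
  set κ := 2 / (σ - 1)
  have hκ : 0 < κ := div_pos two_pos (sub_pos.2 hσ)
  have hκσ : κ * σ = κ + 2 := by
    simp only [κ]; field_simp [(sub_pos.2 hσ).ne']; ring
  set B := κ * ((4 * (κ + 1) + 2 * m) * T ^ 2)
  set K₂ := c₁ * (T ^ 2) ^ (κ * (1 - τ) + 2)
  refine ⟨max 1 (((B + a₁ * (T ^ 2) ^ 2 + K₂) / b₀) ^ (σ - 1)⁻¹), ?_⟩
  intro u x hmax hu hx hux hineq
  have hρ : dist x q ^ 2 ≤ T ^ 2 := pow_le_pow_left₀ dist_nonneg hx.le 2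
  have hη : 0 < T ^ 2 - dist x q ^ 2 :=
    sub_pos.2 (pow_lt_pow_left₀ hx dist_nonneg two_ne_zero)
  have hL : (T ^ 2 - dist x q ^ 2) ^ 2 * lap u x ≤ B * u x := by
    calc (T ^ 2 - dist x q ^ 2) ^ 2 * lap u x
        ≤ κ * u x * (4 * (κ + 1) * dist x q ^ 2 + 2 * m * (T ^ 2 - dist x q ^ 2)) :=
          hmax.sq_mul_lap_le_of_ballWeight_mul hu hx
      _ ≤ κ * u x * ((4 * (κ + 1) + 2 * m) * T ^ 2) := by
          gcongr
          nlinarith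
      _ = B * u x := by ring
  exact le_max_one_rpow_of_mul_rpow_le hb₀ hσ hτ.le (by positivity)
    (mul_rpow_le_of_lichnerowicz hη (sub_le_self _ (sq_nonneg _)) hux ha₁ hc₁ hκ.le hτ.le hκσ
      hL hineq)

theorem lichnerowicz_local_apriori_general {m : ℕ}
    (q : EuclideanSpace ℝ (Fin m)) (T' T : ℝ) (hT'0 : 0 < T') (hT'T : T' < T)
    (Ω : Set (EuclideanSpace ℝ (Fin m))) (hΩ : Ω ⊆ Metric.ball q T')
    (a b c : EuclideanSpace ℝ (Fin m) → ℝ)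
    (ha : ContinuousOn a (Metric.closedBall q T))
    (hb : ContinuousOn b (Metric.closedBall q T))
    (hc : ContinuousOn c (Metric.closedBall q T))
    (hbpos : ∀ x ∈ Metric.closedBall q T, 0 < b x)
    (σ τ : ℝ) (hσ : 1 < σ) (hτ : τ < 1) :
    ∃ C : ℝ, 0 < C ∧
      ∀ u : EuclideanSpace ℝ (Fin m) → ℝ,
        ContDiffOn ℝ 2 u (Metric.closedBall q T) →
        (∀ x ∈ Metric.closedBall q T, 0 < u x) →
        (∀ x ∈ Metric.ball q T,
          0 ≤ lap u x + a x * u x - b x * u x ^ σ + c x * u x ^ τ) →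
        ∀ x ∈ Ω, u x ≤ C := by
  have hT : 0 < T := hT'0.trans hT'T
  have hq : q ∈ closedBall q T := mem_closedBall_self hT.le
  obtain ⟨xb, hxb, hb₀⟩ := (isCompact_closedBall q T).exists_isMinOn ⟨q, hq⟩ hb
  obtain ⟨a₁, ha₁⟩ := (isCompact_closedBall q T).exists_bound_of_continuousOn ha
  obtain ⟨c₁, hc₁⟩ := (isCompact_closedBall q T).exists_bound_of_continuousOn hc
  set κ := 2 / (σ - 1)
  have hκ : 0 < κ := div_pos two_pos (sub_pos.2 hσ)
  obtain ⟨M, hM⟩ := exists_ballWeight_mul_le_of_isLocalMax m q hσ hτ (hbpos xb hxb)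
    ((norm_nonneg _).trans (ha₁ q hq)) ((norm_nonneg _).trans (hc₁ q hq))
  have hε : 0 < (T ^ 2 - T' ^ 2) ^ κ :=
    rpow_pos_of_pos (sub_pos.2 (pow_lt_pow_left₀ hT'T hT'0.le two_ne_zero)) κ
  refine ⟨max 1 M / (T ^ 2 - T' ^ 2) ^ κ, div_pos (lt_max_of_lt_left one_pos) hε, ?_⟩
  intro u hu hupos hineq x hx
  obtain ⟨x₀, hx₀T, hloc, hmax⟩ :=
    exists_isLocalMax_ballWeight_mul hκ hT hu.continuousOn hupos
  have hx₀ : x₀ ∈ closedBall q T := mem_closedBall.2 hx₀T.le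
  have hux₀ := hupos x₀ hx₀
  have hF₀ := hM u x₀ hloc (hu.contDiffAt (closedBall_mem_nhds_of_mem hx₀T)) hx₀T hux₀
    (mul_rpow_le_of_coeff_le hux₀ (hineq x₀ hx₀T) ((le_abs_self _).trans (ha₁ x₀ hx₀))
      (hb₀ hx₀) ((le_abs_self _).trans (hc₁ x₀ hx₀)))
  have hxT' : dist x q < T' := hΩ hx
  have hxK : x ∈ closedBall q T := mem_closedBall.2 (hxT'.trans hT'T).le
  rw [le_div_iff₀ hε]
  calc u x * (T ^ 2 - T' ^ 2) ^ κ ≤ ballWeight q T κ x * u x := by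
        rw [mul_comm]
        exact mul_le_mul_of_nonneg_right (rpow_le_ballWeight hT'0.le hT'T.le hxT'.le hκ.le)
          (hupos x hxK).le
    _ ≤ ballWeight q T κ x₀ * u x₀ := hmax x hxK
    _ ≤ max 1 M := hF₀.trans (le_max_right _ _)

/-- Local a priori estimate: positive solutions of the Lichnerowicz differential
inequality on a ball are uniformly bounded on interior subsets. -/
theorem lichnerowicz_local_apriori {m : ℕ} (hm : 1 ≤ m)
    (q : EuclideanSpace ℝ (Fin m)) (T' T : ℝ) (hT'0 : 0 < T') (hT'T : T' < T)
    (Ω : Set (EuclideanSpace ℝ (Fin m))) (hΩ : Ω ⊆ Metric.ball q T')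
    (a b c : EuclideanSpace ℝ (Fin m) → ℝ)
    (ha : ContinuousOn a (Metric.closedBall q T))
    (hb : ContinuousOn b (Metric.closedBall q T))
    (hc : ContinuousOn c (Metric.closedBall q T))
    (hbpos : ∀ x ∈ Metric.closedBall q T, 0 < b x)
    (hcpos : ∀ x ∈ Metric.closedBall q T, 0 ≤ c x)
    (σ τ : ℝ) (hσ : 1 < σ) (hτ : τ < 1) :
    ∃ C : ℝ, 0 < C ∧
      ∀ u : EuclideanSpace ℝ (Fin m) → ℝ,
        ContDiffOn ℝ 2 u (Metric.closedBall q T) →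
        (∀ x ∈ Metric.closedBall q T, 0 < u x) →
        (∀ x ∈ Metric.ball q T,
          0 ≤ lap u x + a x * u x - b x * u x ^ σ + c x * u x ^ τ) →
        ∀ x ∈ Ω, u x ≤ C :=
  lichnerowicz_local_apriori_general q T' T hT'0 hT'T Ω hΩ a b c ha hb hc hbpos σ τ hσ hτ
end

section
/- Let X be a nonempty set, a, b, c : X → ℝ with b(x) > 0 and c(x) > 0 for all x, let σ > 1, τ < 1 be reals, and suppose H and K are real constants with (a₊(x) + c(x))/b(x) ≤ H and (a₋(x) + b(x))/c(x) ≤ K for all x ∈ X. Set ℋ = max{1, H^{1/(σ−1)}} and 𝒦 = min{1, K^{1/(τ−1)}}. Then 𝒦 ≤ ℋ, and for every x ∈ X one has a(x)·ℋ − b(x)·ℋ^σ + c(x)·ℋ^τ ≤ 0 and a(x)·𝒦 − b(x)·𝒦^σ + c(x)·𝒦^τ ≥ 0; that is, the constants ℋ and 𝒦 are respectively a global supersolution and a global subsolution of the Lichnerowicz-type equation Δu + a(x)u − b(x)u^σ + c(x)u^τ = 0 (constants have vanishing Laplacian). -/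
open Real

/-- The constants `ℋ = max{1, H^{1/(σ−1)}}` and `𝒦 = min{1, K^{1/(τ−1)}}` are
respectively a global supersolution and a global subsolution of the
Lichnerowicz-type equation (constants have vanishing Laplacian), and `𝒦 ≤ ℋ`. -/
theorem lichnerowicz_constant_sub_supersolutions {X : Type*} [Nonempty X]
    (a b c : X → ℝ) (hb : ∀ x, 0 < b x) (hc : ∀ x, 0 < c x)
    (σ τ H K : ℝ) (hσ : 1 < σ) (hτ : τ < 1)
    (hH : ∀ x, (max (a x) 0 + c x) / b x ≤ H)
    (hK : ∀ x, (-min (a x) 0 + b x) / c x ≤ K) :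
    min 1 (K ^ (1 / (τ - 1))) ≤ max 1 (H ^ (1 / (σ - 1))) ∧
    (∀ x, a x * max 1 (H ^ (1 / (σ - 1)))
        - b x * (max 1 (H ^ (1 / (σ - 1)))) ^ σ
        + c x * (max 1 (H ^ (1 / (σ - 1)))) ^ τ ≤ 0) ∧
    (∀ x, 0 ≤ a x * min 1 (K ^ (1 / (τ - 1)))
        - b x * (min 1 (K ^ (1 / (τ - 1)))) ^ σ
        + c x * (min 1 (K ^ (1 / (τ - 1)))) ^ τ) := by
  obtain ⟨x₀⟩ := ‹Nonempty X›
  have hH0 : 0 < H :=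
    lt_of_lt_of_le
      (div_pos (add_pos_of_nonneg_of_pos (le_max_right _ _) (hc x₀)) (hb x₀)) (hH x₀)
  have hK0 : 0 < K := by
    refine lt_of_lt_of_le (div_pos ?_ (hc x₀)) (hK x₀)
    have := min_le_right (a x₀) 0
    have := hb x₀
    linarith
  set ℋ : ℝ := max 1 (H ^ (1 / (σ - 1))) with hℋdef
  set 𝒦 : ℝ := min 1 (K ^ (1 / (τ - 1))) with h𝒦def
  have h1ℋ : (1 : ℝ) ≤ ℋ := le_max_left _ _
  have hℋ0 : 0 < ℋ := lt_of_lt_of_le one_pos h1ℋ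
  have h𝒦0 : 0 < 𝒦 := lt_min one_pos (rpow_pos_of_pos hK0 _)
  have h𝒦1 : 𝒦 ≤ 1 := min_le_left _ _
  have hσ1 : (0:ℝ) < σ - 1 := by linarith
  have hτ1 : τ - 1 < 0 := by linarith
  have hHℋ : H ≤ ℋ ^ (σ - 1) := by
    have h2 : (H ^ (1 / (σ - 1))) ^ (σ - 1) = H := by
      rw [← Real.rpow_mul hH0.le, one_div_mul_cancel hσ1.ne', rpow_one]
    calc H = (H ^ (1 / (σ - 1))) ^ (σ - 1) := h2.symm
      _ ≤ ℋ ^ (σ - 1) :=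
        rpow_le_rpow (rpow_nonneg hH0.le _) (le_max_right _ _) hσ1.le
  have hK𝒦 : K ≤ 𝒦 ^ (τ - 1) := by
    have h2 : (K ^ (1 / (τ - 1))) ^ (τ - 1) = K := by
      rw [← Real.rpow_mul hK0.le, one_div_mul_cancel hτ1.ne, rpow_one]
    calc K = (K ^ (1 / (τ - 1))) ^ (τ - 1) := h2.symm
      _ ≤ 𝒦 ^ (τ - 1) :=
        rpow_le_rpow_of_nonpos h𝒦0 (min_le_right _ _) hτ1.le
  refine ⟨h𝒦1.trans h1ℋ, fun x => ?_, fun x => ?_⟩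
  · have hbx := hb x
    have hcx := hc x
    have key : max (a x) 0 + c x ≤ H * b x := (div_le_iff₀ hbx).mp (hH x)
    have hτℋ : ℋ ^ τ ≤ ℋ := by
      calc ℋ ^ τ ≤ ℋ ^ (1:ℝ) := rpow_le_rpow_of_exponent_le h1ℋ hτ.le
        _ = ℋ := rpow_one _
    have hσℋ : ℋ ^ σ = ℋ ^ (σ - 1) * ℋ := by
      conv_lhs => rw [show σ = (σ - 1) + 1 by ring]
      rw [Real.rpow_add hℋ0, rpow_one]
    have ha : a x ≤ max (a x) 0 := le_max_left _ _
    have h1 : a x * ℋ + c x * ℋ ^ τ ≤ (max (a x) 0 + c x) * ℋ := by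
      have : c x * ℋ ^ τ ≤ c x * ℋ := by nlinarith
      nlinarith
    have h2 : (max (a x) 0 + c x) * ℋ ≤ H * b x * ℋ := by nlinarith
    have h3 : H * b x * ℋ ≤ b x * ℋ ^ σ := by
      have h4 := mul_le_mul_of_nonneg_right
        (mul_le_mul_of_nonneg_left hHℋ hbx.le) hℋ0.le
      rw [hσℋ]; nlinarith [h4]
    linarith
  · have hbx := hb x
    have hcx := hc x
    have key : -min (a x) 0 + b x ≤ K * c x := (div_le_iff₀ hcx).mp (hK x)
    have hσ𝒦 : 𝒦 ^ σ ≤ 𝒦 := by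
      calc 𝒦 ^ σ ≤ 𝒦 ^ (1:ℝ) := rpow_le_rpow_of_exponent_ge h𝒦0 h𝒦1 hσ.le
        _ = 𝒦 := rpow_one _
    have hτ𝒦 : 𝒦 ^ τ = 𝒦 ^ (τ - 1) * 𝒦 := by
      conv_lhs => rw [show τ = (τ - 1) + 1 by ring]
      rw [Real.rpow_add h𝒦0, rpow_one]
    have ha : -min (a x) 0 ≥ -a x := by
      have := min_le_left (a x) 0; linarith
    have h1 : c x * 𝒦 ^ τ ≥ c x * K * 𝒦 := by
      have h4 := mul_le_mul_of_nonneg_right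
        (mul_le_mul_of_nonneg_left hK𝒦 hcx.le) h𝒦0.le
      rw [hτ𝒦]; nlinarith [h4]
    have h2 : c x * K * 𝒦 ≥ (-min (a x) 0 + b x) * 𝒦 := by nlinarith
    have h3 : (-min (a x) 0 + b x) * 𝒦 ≥ -a x * 𝒦 + b x * 𝒦 ^ σ := by nlinarith
    linarith
end

section
/- There exist a real number T > 1 and a function β : ℝ → ℝ which is twice differentiable on [T, +∞), satisfies β(t) > 0 for all t ≥ T, solves the ordinary differential equation β''(t) + (1/(4t²))·(1 + 1/(log t)²)·β(t) = 0 for all t ≥ T, and moreover satisfies β(t) − β'(t) ≥ 0 for all t ≥ T. -/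
/-!
The equation has the explicit solution `β = √f` with `f t = t log t`. For positive `f`,
`(√f)'' = (2 f f'' - f'²) / (4 f √f)`, and here `2 f f'' - f'² = 2 log t - (log t + 1)²
= -(log² t + 1)`, so `(√f)'' = -(log² t + 1) / (4 f √f) = -(1 + 1 / log² t) √f / (4 t²)`.
The inequality `β' ≤ β` amounts to `log t + 1 ≤ 2 t log t`, true once `log t ≥ 1`
because `log t + 1 ≤ t`.
-/

open Real Set

theorem hasDerivAt_div_two_mul_sqrt {f f' : ℝ → ℝ} {x f'' : ℝ} (hf : HasDerivAt f (f' x) x)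
    (hf' : HasDerivAt f' f'' x) (hx : 0 < f x) :
    HasDerivAt (fun y => f' y / (2 * √(f y)))
      ((2 * f x * f'' - f' x ^ 2) / (4 * f x * √(f x))) x := by
  have hs : 0 < √(f x) := sqrt_pos.2 hx
  have hsq : √(f x) ^ 2 = f x := sq_sqrt hx.le
  refine (hf'.div ((hf.sqrt hx.ne').const_mul 2) (by positivity)).congr_deriv ?_
  field_simp
  linear_combination 4 * f' x ^ 2 * hsq

theorem sqrt_mul_log_ode {t : ℝ} (ht : 1 < t) :
    (2 * (t * log t) * t⁻¹ - (log t + 1) ^ 2) / (4 * (t * log t) * √(t * log t)) +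
      1 / (4 * t ^ 2) * (1 + 1 / log t ^ 2) * √(t * log t) = 0 := by
  have hL : 0 < log t := log_pos ht
  have hs : 0 < √(t * log t) := sqrt_pos.2 (mul_log_pos ht)
  have hsq : √(t * log t) ^ 2 = t * log t := sq_sqrt (mul_log_pos ht).le
  field_simp
  linear_combination (log t ^ 2 + 1) * hsq

theorem log_add_one_le_two_mul_mul_log {t : ℝ} (ht : exp 1 ≤ t) :
    log t + 1 ≤ 2 * (t * log t) := by
  have ht0 : 0 < t := (exp_pos 1).trans_le ht
  have hL : 1 ≤ log t := (le_log_iff_exp_le ht0).2 ht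
  nlinarith [log_le_sub_one_of_pos ht0]

/-- The equation `β̈ + (1/(4t²))(1 + 1/log²t) β = 0` is non-oscillatory: it has a
positive solution on some half-line `[T, +∞)` (with `T > 1`) which moreover
satisfies `β − β̇ ≥ 0` there. -/
theorem nonoscillatory_positive_solution_with_beta_ge_beta' :
    ∃ T : ℝ, 1 < T ∧ ∃ β β' β'' : ℝ → ℝ,
      ∀ t ∈ Set.Ici T,
        HasDerivWithinAt β (β' t) (Set.Ici T) t ∧
        HasDerivWithinAt β' (β'' t) (Set.Ici T) t ∧
        0 < β t ∧
        β'' t + (1 / (4 * t ^ 2)) * (1 + 1 / (Real.log t) ^ 2) * β t = 0 ∧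
        0 ≤ β t - β' t := by
  refine ⟨exp 1, one_lt_exp_iff.2 one_pos, fun t => √(t * log t),
    fun t => (log t + 1) / (2 * √(t * log t)),
    fun t => (2 * (t * log t) * t⁻¹ - (log t + 1) ^ 2) / (4 * (t * log t) * √(t * log t)),
    fun t ht => ?_⟩
  have ht1 : 1 < t := (one_lt_exp_iff.2 one_pos).trans_le ht
  have hf : 0 < t * log t := mul_log_pos ht1
  have hf' : HasDerivAt (fun x => x * log x) (log t + 1) t :=
    hasDerivAt_mul_log (by positivity)
  have hf'' : HasDerivAt (fun x => log x + 1) t⁻¹ t :=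
    (hasDerivAt_log (by positivity)).add_const 1
  refine ⟨(hf'.sqrt hf.ne').hasDerivWithinAt,
    (hasDerivAt_div_two_mul_sqrt hf' hf'' hf).hasDerivWithinAt, sqrt_pos.2 hf,
    sqrt_mul_log_ode ht1, ?_⟩
  rw [sub_nonneg, div_le_iff₀ (by positivity), mul_left_comm, ← sq, sq_sqrt hf.le]
  exact log_add_one_le_two_mul_mul_log ht
end

section
/- Let α, β ∈ [0, +∞) and μ, ν ∈ (0, +∞). If t > 0 is a real number satisfying t^μ ≤ α + β/t^ν, then t ≤ (α + β^{μ/(μ+ν)})^{1/μ}. -/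
/-!
Write `β = s ^ (μ + ν)` with `s = β ^ (μ + ν)⁻¹`. If `t ≤ s` then `t ^ μ ≤ s ^ μ` directly; if `s ≤ t`
then `β / t ^ ν = s ^ μ * (s / t) ^ ν ≤ s ^ μ`. Either way `t ^ μ ≤ α + s ^ μ`, and `s ^ μ = β ^ (μ / (μ + ν))`.
-/

open Real

lemma Real.rpow_add_div_rpow_le_of_le {s t μ ν : ℝ} (hs : 0 ≤ s) (hst : s ≤ t) (hμ : 0 ≤ μ)
    (hν : 0 ≤ ν) : s ^ (μ + ν) / t ^ ν ≤ s ^ μ := by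
  rw [rpow_add_of_nonneg hs hμ hν, mul_div_assoc]
  exact mul_le_of_le_one_right (rpow_nonneg hs μ)
    (div_le_one_of_le₀ (rpow_le_rpow hs hst hν) (rpow_nonneg (hs.trans hst) ν))

lemma Real.rpow_le_add_rpow_of_rpow_le_add_div {α s t μ ν : ℝ} (hα : 0 ≤ α) (hs : 0 ≤ s)
    (ht : 0 ≤ t) (hμ : 0 ≤ μ) (hν : 0 ≤ ν) (h : t ^ μ ≤ α + s ^ (μ + ν) / t ^ ν) :
    t ^ μ ≤ α + s ^ μ := by
  rcases le_total t s with hts | hst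
  · linarith [rpow_le_rpow ht hts hμ]
  · linarith [rpow_add_div_rpow_le_of_le hs hst hμ hν]

/-- Elementary lemma: if `t^μ ≤ α + β/t^ν` with `t > 0`, `α, β ≥ 0`, `μ, ν > 0`,
then `t ≤ (α + β^{μ/(μ+ν)})^{1/μ}`. -/
theorem elementary_power_bound (α β μ ν t : ℝ)
    (hα : 0 ≤ α) (hβ : 0 ≤ β) (hμ : 0 < μ) (hν : 0 < ν) (ht : 0 < t)
    (h : t ^ μ ≤ α + β / t ^ ν) :
    t ≤ (α + β ^ (μ / (μ + ν))) ^ (1 / μ) := by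
  have hμν : μ + ν ≠ 0 := by positivity
  set s := β ^ (μ + ν)⁻¹ with hs_def
  have hs : 0 ≤ s := rpow_nonneg hβ _
  have hβs : β = s ^ (μ + ν) := (rpow_inv_rpow hβ hμν).symm
  have hsμ : s ^ μ = β ^ (μ / (μ + ν)) := by
    rw [hs_def, ← rpow_mul hβ, inv_mul_eq_div]
  rw [hβs] at h
  rw [one_div, le_rpow_inv_iff_of_pos ht.le (by positivity) hμ, ← hsμ]
  exact rpow_le_add_rpow_of_rpow_le_add_div hα hs ht.le hμ.le hν.le h
end
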